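/- arXiv:2512.15678 — 3 statements merged into one kernel-verified Lean document; each statement's English description precedes it below -/
import Mathlib

section
/- Let f : ℝ^n → ℝ^n be locally bounded, let T > 0, and let x : [0,T] → ℝ^n be absolutely continuous. Then x is a Hermes solution of ẋ = f(x) on [0,T] if and only if x is a Krasovskii solution of ẋ = f(x) on [0,T]. -/
open Set Filter Metric MeasureTheory Topology
open scoped RealInnerProductSpace

noncomputable section

namespace HS

/-- Euclidean space `ℝ^n`. -/
abbrev E (n : ℕ) : Type := EuclideanSpace ℝ (Fin n)

/-- Data of a hybrid system `H = (C, F, D, G)`: flows `ẋ ∈ F x` on `C`,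
jumps `x⁺ ∈ G x` on `D`. -/
structure System (X : Type*) where
  C : Set X
  F : X → Set X
  D : Set X
  G : X → Set X

variable {X Y : Type*}

/-- Outer semicontinuity of a set-valued map relative to a set `K` (sequential form). -/
def OSCRel [TopologicalSpace X] [TopologicalSpace Y] (M : X → Set Y) (K : Set X) : Prop :=
  ∀ (z : X) (s : Y) (zs : ℕ → X) (ss : ℕ → Y),
    z ∈ K → (∀ i, zs i ∈ K) → Tendsto zs atTop (𝓝 z) →
    (∀ i, ss i ∈ M (zs i)) → Tendsto ss atTop (𝓝 s) → s ∈ M z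

/-- Local boundedness of a set-valued map relative to a set `K`. -/
def LocBddRel [TopologicalSpace X] [Bornology Y] (M : X → Set Y) (K : Set X) : Prop :=
  ∀ z ∈ K, ∃ U : Set X, IsOpen U ∧ z ∈ U ∧ Bornology.IsBounded (⋃ x ∈ U ∩ K, M x)

/-- The Hybrid Basic Conditions. -/
def BasicConditions [NormedAddCommGroup X] [NormedSpace ℝ X] (H : System X) : Prop :=
  IsClosed H.C ∧ IsClosed H.D ∧
  OSCRel H.F H.C ∧ LocBddRel H.F H.C ∧
  (∀ x ∈ H.C, (H.F x).Nonempty ∧ Convex ℝ (H.F x)) ∧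
  OSCRel H.G H.D ∧ LocBddRel H.G H.D ∧ (∀ x ∈ H.D, (H.G x).Nonempty)

/-- Compact hybrid time domains. -/
def IsCompactHTD (E : Set (ℝ × ℕ)) : Prop :=
  ∃ (J : ℕ) (t : ℕ → ℝ), t 0 = 0 ∧ (∀ j, j < J → t j ≤ t (j+1)) ∧
    E = ⋃ j ∈ Finset.range J, Icc (t j) (t (j+1)) ×ˢ ({j} : Set ℕ)

/-- Hybrid time domains: unions of nondecreasing sequences of compact hybrid time domains. -/
def IsHTD (E : Set (ℝ × ℕ)) : Prop :=
  ∃ Ek : ℕ → Set (ℝ × ℕ), (∀ k, IsCompactHTD (Ek k)) ∧ Monotone Ek ∧ E = ⋃ k, Ek k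

/-- A hybrid arc: a function defined on a hybrid time domain containing `(0,0)`. -/
structure Arc (X : Type*) where
  dom : Set (ℝ × ℕ)
  htd : IsHTD dom
  init : ((0:ℝ), (0:ℕ)) ∈ dom
  val : ℝ × ℕ → X

/-- The `j`-th flow interval `I_j` of a hybrid time domain. -/
def slice (dom : Set (ℝ × ℕ)) (j : ℕ) : Set ℝ := {t | (t, j) ∈ dom}

/-- Solutions of a hybrid system: absolutely continuous (encoded via an integrable
a.e. selection of the flow map) along flows, and satisfying the jump conditions. -/
def IsSolution [NormedAddCommGroup X] [NormedSpace ℝ X] (H : System X) (x : Arc X) : Prop :=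
  x.val (0,0) ∈ H.C ∪ H.D ∧
  (∀ j : ℕ, ∃ v : ℝ → X,
    (∀ᵐ t ∂(volume.restrict (slice x.dom j)),
      x.val (t, j) ∈ H.C ∧ v t ∈ H.F (x.val (t, j))) ∧
    (∀ t ∈ slice x.dom j, ∀ t' ∈ slice x.dom j,
      IntervalIntegrable v volume t' t ∧
      x.val (t, j) - x.val (t', j) = ∫ s in t'..t, v s)) ∧
  (∀ (t : ℝ) (j : ℕ), (t, j) ∈ x.dom → (t, j+1) ∈ x.dom →
    x.val (t, j) ∈ H.D ∧ x.val (t, j+1) ∈ H.G (x.val (t, j)))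

/-- Maximal solutions. -/
def IsMaximal [NormedAddCommGroup X] [NormedSpace ℝ X] (H : System X) (x : Arc X) : Prop :=
  IsSolution H x ∧ ∀ ψ : Arc X, IsSolution H ψ → x.dom ⊆ ψ.dom →
    (∀ p ∈ x.dom, ψ.val p = x.val p) → ψ.dom ⊆ x.dom

/-- Complete solutions: unbounded hybrid time domain. -/
def Complete (x : Arc X) : Prop := ∀ m : ℝ, ∃ p ∈ x.dom, m < p.1 + (p.2 : ℝ)

/-- Bounded solutions: bounded range. -/
def BoundedArc [Bornology X] (x : Arc X) : Prop := Bornology.IsBounded (x.val '' x.dom)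

/-- Class-KL functions. -/
def ClassKL (β : ℝ → ℝ → ℝ) : Prop :=
  (∀ r s, 0 ≤ r → 0 ≤ s → 0 ≤ β r s) ∧
  (∀ s, 0 ≤ s → MonotoneOn (fun r => β r s) (Ici 0)) ∧
  (∀ r, 0 ≤ r → AntitoneOn (fun s => β r s) (Ici 0)) ∧
  (∀ s, 0 ≤ s → Tendsto (fun r => β r s) (𝓝[>] 0) (𝓝 0)) ∧
  (∀ r, 0 ≤ r → Tendsto (fun s => β r s) atTop (𝓝 0))

/-- Class-K∞ functions. -/
def ClassKInf (α : ℝ → ℝ) : Prop :=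
  ContinuousOn α (Ici 0) ∧ α 0 = 0 ∧ StrictMonoOn α (Ici 0) ∧ Tendsto α atTop atTop

/-- Uniform global asymptotic stability of a set `A`. -/
def UGAS [NormedAddCommGroup X] [NormedSpace ℝ X] (H : System X) (A : Set X) : Prop :=
  ∃ β, ClassKL β ∧ ∀ x : Arc X, IsMaximal H x → ∀ p ∈ x.dom,
    infDist (x.val p) A ≤ β (infDist (x.val (0,0)) A) (p.1 + (p.2 : ℝ))

/-- Uniform global exponential stability of a set `A`. -/
def UGES [NormedAddCommGroup X] [NormedSpace ℝ X] (H : System X) (A : Set X) : Prop :=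
  ∃ c₁ c₂ : ℝ, 0 < c₁ ∧ 0 < c₂ ∧ ∀ x : Arc X, IsMaximal H x → ∀ p ∈ x.dom,
    infDist (x.val p) A ≤ c₁ * infDist (x.val (0,0)) A * Real.exp (-(c₂ * (p.1 + (p.2 : ℝ))))

/-- The KL-plus-offset bound on all maximal solutions starting in `S`. -/
def SolBound [NormedAddCommGroup X] [NormedSpace ℝ X]
    (H : System X) (A : Set X) (β : ℝ → ℝ → ℝ) (ν : ℝ) (S : Set X) : Prop :=
  ∀ x : Arc X, IsMaximal H x → x.val (0,0) ∈ S → ∀ p ∈ x.dom,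
    infDist (x.val p) A ≤ β (infDist (x.val (0,0)) A) (p.1 + (p.2 : ℝ)) + ν

/-- SGPAS as `ε → 0⁺` for a one-parameter family of hybrid systems. -/
def SGPAS1 [NormedAddCommGroup X] [NormedSpace ℝ X]
    (H : ℝ → System X) (A : Set X) : Prop :=
  ∃ β, ClassKL β ∧ ∀ Δ ν : ℝ, 0 < ν → ν < Δ →
    ∃ e1 > (0:ℝ), ∀ ε1 ∈ Ioo (0:ℝ) e1,
      SolBound (H ε1) A β ν {z | infDist z A ≤ Δ}

/-- SGPAS as `(ε₁, ε₂, ε₃) → 0⁺` (parameters tuned sequentially). -/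
def SGPAS3 [NormedAddCommGroup X] [NormedSpace ℝ X]
    (H : ℝ → ℝ → ℝ → System X) (A : Set X) : Prop :=
  ∃ β, ClassKL β ∧ ∀ Δ ν : ℝ, 0 < ν → ν < Δ →
    ∃ e1 > (0:ℝ), ∀ ε1 ∈ Ioo (0:ℝ) e1,
    ∃ e2 > (0:ℝ), ∀ ε2 ∈ Ioo (0:ℝ) e2,
    ∃ e3 > (0:ℝ), ∀ ε3 ∈ Ioo (0:ℝ) e3,
      SolBound (H ε1 ε2 ε3) A β ν {z | infDist z A ≤ Δ}

/-- SGPAS as `(ε₁, ε₂, ε₃, ε₄) → 0⁺` (parameters tuned sequentially). -/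
def SGPAS4 [NormedAddCommGroup X] [NormedSpace ℝ X]
    (H : ℝ → ℝ → ℝ → ℝ → System X) (A : Set X) : Prop :=
  ∃ β, ClassKL β ∧ ∀ Δ ν : ℝ, 0 < ν → ν < Δ →
    ∃ e1 > (0:ℝ), ∀ ε1 ∈ Ioo (0:ℝ) e1,
    ∃ e2 > (0:ℝ), ∀ ε2 ∈ Ioo (0:ℝ) e2,
    ∃ e3 > (0:ℝ), ∀ ε3 ∈ Ioo (0:ℝ) e3,
    ∃ e4 > (0:ℝ), ∀ ε4 ∈ Ioo (0:ℝ) e4,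
      SolBound (H ε1 ε2 ε3 ε4) A β ν {z | infDist z A ≤ Δ}

/-- SGPAS as `(ε₁, ..., ε₅) → 0⁺` (parameters tuned sequentially). -/
def SGPAS5 [NormedAddCommGroup X] [NormedSpace ℝ X]
    (H : ℝ → ℝ → ℝ → ℝ → ℝ → System X) (A : Set X) : Prop :=
  ∃ β, ClassKL β ∧ ∀ Δ ν : ℝ, 0 < ν → ν < Δ →
    ∃ e1 > (0:ℝ), ∀ ε1 ∈ Ioo (0:ℝ) e1,
    ∃ e2 > (0:ℝ), ∀ ε2 ∈ Ioo (0:ℝ) e2,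
    ∃ e3 > (0:ℝ), ∀ ε3 ∈ Ioo (0:ℝ) e3,
    ∃ e4 > (0:ℝ), ∀ ε4 ∈ Ioo (0:ℝ) e4,
    ∃ e5 > (0:ℝ), ∀ ε5 ∈ Ioo (0:ℝ) e5,
      SolBound (H ε1 ε2 ε3 ε4 ε5) A β ν {z | infDist z A ≤ Δ}

/-- Global practical asymptotic stability as `(ε₁, ε₂, ε₃, ε₄) → 0⁺`:
no restriction on the initial condition. -/
def GPAS4 [NormedAddCommGroup X] [NormedSpace ℝ X]
    (H : ℝ → ℝ → ℝ → ℝ → System X) (A : Set X) : Prop :=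
  ∃ β, ClassKL β ∧ ∀ ν : ℝ, 0 < ν →
    ∃ e1 > (0:ℝ), ∀ ε1 ∈ Ioo (0:ℝ) e1,
    ∃ e2 > (0:ℝ), ∀ ε2 ∈ Ioo (0:ℝ) e2,
    ∃ e3 > (0:ℝ), ∀ ε3 ∈ Ioo (0:ℝ) e3,
    ∃ e4 > (0:ℝ), ∀ ε4 ∈ Ioo (0:ℝ) e4,
      SolBound (H ε1 ε2 ε3 ε4) A β ν univ

/-- `(τ, ε)`-closeness of two hybrid arcs. -/
def Close [PseudoMetricSpace X] (τ ε : ℝ) (x y : Arc X) : Prop :=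
  (∀ (t : ℝ) (j : ℕ), (t, j) ∈ x.dom → t + (j : ℝ) ≤ τ →
    ∃ s : ℝ, 0 ≤ s ∧ (s, j) ∈ y.dom ∧ |t - s| ≤ ε ∧ dist (x.val (t, j)) (y.val (s, j)) < ε) ∧
  (∀ (t : ℝ) (j : ℕ), (t, j) ∈ y.dom → t + (j : ℝ) ≤ τ →
    ∃ s : ℝ, 0 ≤ s ∧ (s, j) ∈ x.dom ∧ |t - s| ≤ ε ∧ dist (y.val (t, j)) (x.val (s, j)) < ε)

/-- The `ρ`-inflation of a hybrid system, with inflation profile `σ`. -/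
def inflate [NormedAddCommGroup X] [NormedSpace ℝ X] (H : System X) (σ : X → ℝ) (ρ : ℝ) :
    System X where
  C := {x | (closedBall x (ρ * σ x) ∩ H.C).Nonempty}
  F := fun x => {v | ∃ w ∈ closure (convexHull ℝ (⋃ y ∈ closedBall x (ρ * σ x) ∩ H.C, H.F y)),
      ‖v - w‖ ≤ ρ * σ x}
  D := {x | (closedBall x (ρ * σ x) ∩ H.D).Nonempty}
  G := fun x => {v | ∃ y ∈ closedBall x (ρ * σ x) ∩ H.D, ∃ g ∈ H.G y, ‖v - g‖ ≤ ρ * σ g}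

/-- Extraction of the `û`-component (first `n` coordinates of `x_{u,z} ∈ ℝ^{n+r}`). -/
def uhat (n r : ℕ) (x : E (n+r)) : E n := WithLp.toLp 2 (fun i => x (Fin.castAdd r i))

/-- Extraction of the `ẑ`-component (last `r` coordinates of `x_{u,z} ∈ ℝ^{n+r}`). -/
def zhat (n r : ℕ) (x : E (n+r)) : E r := WithLp.toLp 2 (fun i => x (Fin.natAdd n i))

/-- The matrix `𝔻` extracting the odd-indexed entries of `μ ∈ ℝ^{2n}`. -/
def Dmat (n : ℕ) (μ : E (2*n)) : E n := WithLp.toLp 2 (fun i => μ ⟨2 * i.1, by have := i.2; omega⟩)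

/-- The torus `𝕊^n ⊆ ℝ^{2n}`: product of `n` unit circles. -/
def Sph (n : ℕ) : Set (E (2*n)) :=
  {μ | ∀ i : Fin n,
    (μ ⟨2*i.1, by have := i.2; omega⟩)^2 + (μ ⟨2*i.1+1, by have := i.2; omega⟩)^2 = 1}

/-- The block-diagonal oscillator matrix `Φ(ω)` acting on `μ ∈ ℝ^{2n}`, with
`ω_i = κ_i / ε_ω` and 2×2 blocks `ω_i R₀`, `R₀ = [[0,1],[-1,0]]`. -/
def Phi (n : ℕ) (κ : Fin n → ℚ) (εω : ℝ) (μ : E (2*n)) : E (2*n) :=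
  WithLp.toLp 2 (fun j => if h : j.1 % 2 = 0 then
      ((κ ⟨j.1/2, by have := j.2; omega⟩ : ℝ) / εω) * μ ⟨j.1+1, by have := j.2; omega⟩
    else
      -(((κ ⟨j.1/2, by have := j.2; omega⟩ : ℝ) / εω) * μ ⟨j.1-1, by have := j.2; omega⟩))

/-- The set `A := 𝒪 × Ψ` viewed inside `ℝ^{n+r}`. -/
def setA (n r : ℕ) (O : Set (E n)) (Ψ : Set (E r)) : Set (E (n+r)) :=
  {x | uhat n r x ∈ O ∧ zhat n r x ∈ Ψ}

/-- The Krasovskii regularization of a (possibly discontinuous) vector field. -/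
def FK {n : ℕ} (f : E n → E n) (x : E n) : Set (E n) :=
  ⋂ ε ∈ Ioi (0:ℝ), closure (convexHull ℝ (f '' closedBall x ε))

/-- Absolute continuity on `[0,T]`, encoded by an integrable derivative. -/
def IsACOn {n : ℕ} (T : ℝ) (x : ℝ → E n) : Prop :=
  ∃ v : ℝ → E n, IntervalIntegrable v volume 0 T ∧
    ∀ t ∈ Icc (0:ℝ) T, x t = x 0 + ∫ s in (0:ℝ)..t, v s

/-- Krasovskii solutions of `ẋ = f(x)` on `[0,T]`. -/
def IsKrasSol {n : ℕ} (f : E n → E n) (T : ℝ) (x : ℝ → E n) : Prop :=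
  ∃ v : ℝ → E n, IntervalIntegrable v volume 0 T ∧
    (∀ t ∈ Icc (0:ℝ) T, x t = x 0 + ∫ s in (0:ℝ)..t, v s) ∧
    (∀ᵐ t ∂(volume.restrict (Icc (0:ℝ) T)), v t ∈ FK f (x t))

/-- Hermes solutions of `ẋ = f(x)` on `[0,T]`: uniform limits of solutions under
vanishing measurable state perturbations. -/
def IsHermesSol {n : ℕ} (f : E n → E n) (T : ℝ) (x : ℝ → E n) : Prop :=
  ∃ (xs : ℕ → ℝ → E n) (es : ℕ → ℝ → E n),
    (∀ i, Measurable (es i)) ∧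
    (∀ i, ∃ v : ℝ → E n, IntervalIntegrable v volume 0 T ∧
      (∀ t ∈ Icc (0:ℝ) T, xs i t = xs i 0 + ∫ s in (0:ℝ)..t, v s) ∧
      (∀ᵐ t ∂(volume.restrict (Icc (0:ℝ) T)), v t = f (xs i t + es i t))) ∧
    TendstoUniformlyOn xs x atTop (Icc 0 T) ∧
    TendstoUniformlyOn es (fun _ => 0) atTop (Icc 0 T)

section Statement16Aux
set_option maxHeartbeats 1600000

variable {n : ℕ}

lemma bound_on_compact (f : E n → E n)
    (hf : ∀ x : E n, ∃ U ∈ 𝓝 x, Bornology.IsBounded (f '' U))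
    {K : Set (E n)} (hK : IsCompact K) : ∃ M : ℝ, ∀ z ∈ K, ‖f z‖ ≤ M := by
  choose U hU hB using hf
  obtain ⟨t, -, ht⟩ := hK.elim_nhds_subcover U (fun x _ => hU x)
  choose R hR using fun z : E n => (hB z).subset_closedBall 0
  refine ⟨∑ z ∈ t, max (R z) 0, fun z hz => ?_⟩
  obtain ⟨w, hwt, hzw⟩ := by simpa using ht hz
  have h1 : f z ∈ closedBall 0 (R w) := hR w ⟨z, hzw, rfl⟩
  have h2 : ‖f z‖ ≤ R w := by simpa [mem_closedBall, dist_eq_norm] using h1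
  calc ‖f z‖ ≤ max (R w) 0 := h2.trans (le_max_left _ _)
    _ ≤ ∑ z ∈ t, max (R z) 0 :=
      Finset.single_le_sum (f := fun z => max (R z) 0) (fun i _ => le_max_right _ _) hwt

lemma smul_integral_mem {s : Set (E n)} (hconv : Convex ℝ s) (hcl : IsClosed s)
    {a b : ℝ} (hab : a < b) {g : ℝ → E n} (hint : IntegrableOn g (Ioc a b))
    (hmem : ∀ᵐ t ∂(volume.restrict (Ioc a b)), g t ∈ s) :
    (b - a)⁻¹ • ∫ t in a..b, g t ∈ s := by
  have h := hconv.set_average_mem hcl (by simp [hab]) (by simp) hmem hint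
  rwa [setAverage_eq, Real.volume_real_Ioc_of_le hab.le,
    ← intervalIntegral.integral_of_le hab.le] at h


lemma FK_subset (f : E n → E n) (x : E n) {v : E n} (hv : v ∈ FK f x) {ε : ℝ} (hε : 0 < ε) :
    v ∈ closure (convexHull ℝ (f '' closedBall x ε)) := by
  simp only [FK, mem_iInter, mem_Ioi] at hv
  exact hv ε hε

lemma exists_rep {s : Set (E n)} {p : E n} (hp : p ∈ convexHull ℝ s) :
    ∃ (m : ℕ) (w : ℕ → ℝ) (z : ℕ → E n), 0 < m ∧ (∀ k < m, 0 ≤ w k ∧ z k ∈ s) ∧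
      ∑ k ∈ Finset.range m, w k = 1 ∧ ∑ k ∈ Finset.range m, w k • z k = p := by
  obtain ⟨ι, hι, w, z, hw0, hw1, hz, hx⟩ := mem_convexHull_iff_exists_fintype.mp hp
  set m := Fintype.card ι with hm
  let e := Fintype.equivFin ι
  refine ⟨m, fun k => if h : k < m then w (e.symm ⟨k, h⟩) else 0,
    fun k => if h : k < m then z (e.symm ⟨k, h⟩) else p, ?_, ?_, ?_, ?_⟩
  · rcases Nat.eq_zero_or_pos m with h0 | h0
    · exfalso
      have : IsEmpty ι := Fintype.card_eq_zero_iff.mp h0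
      simp [Finset.univ_eq_empty] at hw1
    · exact h0
  · intro k hk
    simp only [dif_pos hk]
    exact ⟨hw0 _, hz _⟩
  · rw [← Fin.sum_univ_eq_sum_range]
    calc ∑ k : Fin m, (if h : (k:ℕ) < m then w (e.symm ⟨k, h⟩) else 0)
        = ∑ k : Fin m, w (e.symm k) := by
          apply Finset.sum_congr rfl; intro k _; rw [dif_pos k.2]
      _ = 1 := by rw [Equiv.sum_comp e.symm w]; exact hw1
  · rw [← Fin.sum_univ_eq_sum_range]
    calc ∑ k : Fin m, (if h : (k:ℕ) < m then w (e.symm ⟨k, h⟩) else 0) •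
          (if h : (k:ℕ) < m then z (e.symm ⟨k, h⟩) else p)
        = ∑ k : Fin m, w (e.symm k) • z (e.symm k) := by
          apply Finset.sum_congr rfl; intro k _; rw [dif_pos k.2, dif_pos k.2]
      _ = p := by rw [Equiv.sum_comp e.symm (fun i => w i • z i)]; exact hx

lemma find_piece (g : ℕ → ℝ) : ∀ (m : ℕ) (t : ℝ), g 0 ≤ t → t < g m →
    ∃ k < m, g k ≤ t ∧ t < g (k+1) := by
  intro m
  induction m with
  | zero => intro t h1 h2; exact absurd (h1.trans_lt h2) (lt_irrefl _)
  | succ m ih =>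
    intro t h1 h2
    by_cases h : t < g m
    · obtain ⟨k, hk, hk1, hk2⟩ := ih t h1 h
      exact ⟨k, hk.trans (Nat.lt_succ_self m), hk1, hk2⟩
    · exact ⟨m, Nat.lt_succ_self m, not_lt.mp h, h2⟩

lemma contOn_primitive {T : ℝ} (hT : 0 ≤ T) {v : ℝ → E n}
    (hvI : IntervalIntegrable v volume 0 T) {x : ℝ → E n}
    (hid : ∀ t ∈ Icc (0:ℝ) T, x t = x 0 + ∫ s in (0:ℝ)..t, v s) :
    ContinuousOn x (Icc 0 T) := by
  have h1 : IntegrableOn v (uIcc 0 T) volume := by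
    rw [uIcc_of_le hT, integrableOn_Icc_iff_integrableOn_Ioc]
    exact (intervalIntegrable_iff_integrableOn_Ioc_of_le hT).mp hvI
  have h2 : ContinuousOn (fun t => x 0 + ∫ s in (0:ℝ)..t, v s) (Icc 0 T) := by
    apply ContinuousOn.add continuousOn_const
    have := intervalIntegral.continuousOn_primitive_interval (a := 0) (b := T) (μ := volume) h1
    rwa [uIcc_of_le hT] at this
  exact ContinuousOn.congr h2 hid


theorem hermes_to_kras (f : E n → E n)
    {T : ℝ} (hT : 0 < T) {x : ℝ → E n}
    (v : ℝ → E n) (hvI : IntervalIntegrable v volume 0 T)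
    (hvid : ∀ t ∈ Icc (0:ℝ) T, x t = x 0 + ∫ s in (0:ℝ)..t, v s)
    (xs es : ℕ → ℝ → E n)
    (hsol : ∀ i, ∃ w : ℝ → E n, IntervalIntegrable w volume 0 T ∧
      (∀ t ∈ Icc (0:ℝ) T, xs i t = xs i 0 + ∫ s in (0:ℝ)..t, w s) ∧
      (∀ᵐ t ∂(volume.restrict (Icc (0:ℝ) T)), w t = f (xs i t + es i t)))
    (hxsu : TendstoUniformlyOn xs x atTop (Icc 0 T))
    (hesu : TendstoUniformlyOn es (fun _ => 0) atTop (Icc 0 T)) :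
    ∀ᵐ t ∂(volume.restrict (Icc (0:ℝ) T)), v t ∈ FK f (x t) := by
  have hxc : ContinuousOn x (Icc 0 T) := contOn_primitive hT.le hvI hvid
  set w : ℝ → E n := (Icc (0:ℝ) T).indicator v with hw
  have hvint : IntegrableOn v (Icc 0 T) := by
    rw [integrableOn_Icc_iff_integrableOn_Ioc]
    exact (intervalIntegrable_iff_integrableOn_Ioc_of_le hT.le).mp hvI
  have hwint : Integrable w := (integrable_indicator_iff measurableSet_Icc).2 hvint
  have hleb := IsUnifLocDoublingMeasure.ae_tendsto_average (μ := (volume : Measure ℝ))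
    hwint.locallyIntegrable 1
  have h1 : ∀ᵐ t ∂(volume.restrict (Icc (0:ℝ) T)), t ∈ Ioo (0:ℝ) T := by
    have hnull : (volume : Measure ℝ) ({0, T} : Set ℝ) = 0 :=
      ((Set.countable_singleton T).insert 0).measure_zero _
    have h2 : ∀ᵐ t ∂(volume.restrict (Icc (0:ℝ) T)), t ∉ ({0, T} : Set ℝ) :=
      ae_restrict_of_ae (compl_mem_ae_iff.2 hnull)
    filter_upwards [h2, ae_restrict_mem measurableSet_Icc] with t ht htIcc
    simp only [Set.mem_insert_iff, Set.mem_singleton_iff, not_or] at ht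
    exact ⟨lt_of_le_of_ne htIcc.1 (Ne.symm ht.1), lt_of_le_of_ne htIcc.2 ht.2⟩
  have h2 : ∀ᵐ t ∂(volume.restrict (Icc (0:ℝ) T)),
      Tendsto (fun r => ⨍ y in closedBall t r, w y) (𝓝[>] 0) (𝓝 (w t)) := by
    apply ae_restrict_of_ae
    filter_upwards [hleb] with t ht
    exact ht (fun _ => t) id tendsto_id (by
      filter_upwards [self_mem_nhdsWithin] with r hr
      simp only [one_mul]
      exact mem_closedBall_self (le_of_lt hr))
  filter_upwards [h1, h2, ae_restrict_mem measurableSet_Icc] with t htIoo htend htIcc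
  simp only [FK, mem_iInter, mem_Ioi]
  intro ε hε
  set Kset := closure (convexHull ℝ (f '' closedBall (x t) ε)) with hK
  have hKc : IsClosed Kset := isClosed_closure
  have hKconv : Convex ℝ Kset := (convex_convexHull ℝ _).closure
  -- continuity at t
  have hct : ContinuousWithinAt x (Icc 0 T) t := hxc t htIcc
  obtain ⟨r1, hr1, hr1'⟩ := Metric.continuousWithinAt_iff.mp hct (ε/2) (by positivity)
  set r0 : ℝ := min (min (t/2) ((T - t)/2)) (r1/2) with hr0def
  have hr0 : 0 < r0 := by
    obtain ⟨ht1, ht2⟩ := htIoo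
    exact lt_min (lt_min (by linarith) (by linarith)) (by linarith)
  have key : ∀ r, 0 < r → r ≤ r0 → (⨍ y in closedBall t r, w y) ∈ Kset := by
    intro r hr hrr0
    have hrt : r ≤ t/2 := hrr0.trans ((min_le_left _ _).trans (min_le_left _ _))
    have hrT : r ≤ (T - t)/2 := hrr0.trans ((min_le_left _ _).trans (min_le_right _ _))
    have hrr1 : r < r1 := lt_of_le_of_lt (hrr0.trans (min_le_right _ _)) (by linarith)
    have hsub : Icc (t - r) (t + r) ⊆ Icc 0 T := by
      apply Icc_subset_Icc <;> cases htIoo <;> linarith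
    have hsub' : Ioc (t - r) (t + r) ⊆ Icc 0 T := Ioc_subset_Icc_self.trans hsub
    have hlt : t - r < t + r := by linarith
    -- rewrite the average
    have havg : (⨍ y in closedBall t r, w y) = (2*r)⁻¹ • ∫ s in (t-r)..(t+r), v s := by
      rw [Real.closedBall_eq_Icc, setAverage_eq, Real.volume_real_Icc_of_le (by linarith)]
      have h3 : ∫ y in Icc (t-r) (t+r), w y = ∫ y in Icc (t-r) (t+r), v y :=
        setIntegral_congr_fun measurableSet_Icc (fun s hs => indicator_of_mem (hsub hs) v)
      rw [h3, integral_Icc_eq_integral_Ioc, ← intervalIntegral.integral_of_le hlt.le]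
      norm_num
      ring_nf
    rw [havg]
    -- the limit of approximants
    have hmemIcc : ∀ s : ℝ, s ∈ Icc (t-r) (t+r) → s ∈ Icc (0:ℝ) T := fun s hs => hsub hs
    have htpr : t + r ∈ Icc (0:ℝ) T := hmemIcc _ (by constructor <;> linarith)
    have htmr : t - r ∈ Icc (0:ℝ) T := hmemIcc _ (by constructor <;> linarith)
    have hXint : ∫ s in (t-r)..(t+r), v s = x (t+r) - x (t-r) := by
      rw [hvid _ htpr, hvid _ htmr]
      have i1 : IntervalIntegrable v volume 0 (t+r) :=
        hvI.mono_set (by rw [uIcc_of_le htpr.1, uIcc_of_le hT.le]; exact Icc_subset_Icc le_rfl htpr.2)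
      have i2 : IntervalIntegrable v volume 0 (t-r) :=
        hvI.mono_set (by rw [uIcc_of_le htmr.1, uIcc_of_le hT.le]; exact Icc_subset_Icc le_rfl htmr.2)
      rw [add_sub_add_left_eq_sub, ← intervalIntegral.integral_interval_sub_left i1 i2]
    rw [hXint]
    -- approximants converge
    have htends : Tendsto (fun i => (2*r)⁻¹ • (xs i (t+r) - xs i (t-r))) atTop
        (𝓝 ((2*r)⁻¹ • (x (t+r) - x (t-r)))) := by
      exact (((hxsu.tendsto_at htpr).sub (hxsu.tendsto_at htmr)).const_smul _)
    apply hKc.mem_of_tendsto htends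
    -- eventually in Kset
    have hev1 := Metric.tendstoUniformlyOn_iff.mp hxsu (ε/4) (by positivity)
    have hev2 := Metric.tendstoUniformlyOn_iff.mp hesu (ε/4) (by positivity)
    filter_upwards [hev1, hev2] with i hi1 hi2
    obtain ⟨vi, hviI, hviid, hvieq⟩ := hsol i
    have hXi : xs i (t+r) - xs i (t-r) = ∫ s in (t-r)..(t+r), vi s := by
      rw [hviid _ htpr, hviid _ htmr]
      have i1 : IntervalIntegrable vi volume 0 (t+r) :=
        hviI.mono_set (by rw [uIcc_of_le htpr.1, uIcc_of_le hT.le]; exact Icc_subset_Icc le_rfl htpr.2)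
      have i2 : IntervalIntegrable vi volume 0 (t-r) :=
        hviI.mono_set (by rw [uIcc_of_le htmr.1, uIcc_of_le hT.le]; exact Icc_subset_Icc le_rfl htmr.2)
      rw [add_sub_add_left_eq_sub, ← intervalIntegral.integral_interval_sub_left i1 i2]
    rw [hXi]
    have hint : IntegrableOn vi (Ioc (t-r) (t+r)) := by
      apply ((intervalIntegrable_iff_integrableOn_Ioc_of_le hT.le).mp hviI).mono_set
      exact Ioc_subset_Ioc (by cases htIoo; linarith) htpr.2
    have hmem : ∀ᵐ s ∂(volume.restrict (Ioc (t-r) (t+r))), vi s ∈ Kset := by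
      have hss : Ioc (t-r) (t+r) ⊆ Icc (0:ℝ) T := hsub'
      filter_upwards [ae_restrict_of_ae_restrict_of_subset hss hvieq,
        ae_restrict_mem measurableSet_Ioc] with s hs hsIoc
      rw [hs]
      apply subset_closure
      apply subset_convexHull
      refine ⟨xs i s + es i s, ?_, rfl⟩
      have hsIcc : s ∈ Icc (0:ℝ) T := hss hsIoc
      have d1 : dist (x s) (xs i s) < ε/4 := hi1 s hsIcc
      have d2 : dist (0:E n) (es i s) < ε/4 := hi2 s hsIcc
      have d3 : dist s t < r1 := by
        rw [Real.dist_eq, abs_sub_lt_iff]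
        cases hsIoc; constructor <;> linarith
      have d4 : dist (x s) (x t) < ε/2 := hr1' hsIcc d3
      rw [mem_closedBall]
      calc dist (xs i s + es i s) (x t)
          ≤ dist (xs i s + es i s) (xs i s) + dist (xs i s) (x s) + dist (x s) (x t) :=
            dist_triangle4 _ _ _ _
        _ ≤ ε/4 + ε/4 + ε/2 := by
            refine add_le_add (add_le_add ?_ (le_of_lt (dist_comm (x s) (xs i s) ▸ d1))) d4.le
            have heq : dist (xs i s + es i s) (xs i s) = dist (0:E n) (es i s) := by
              rw [dist_eq_norm, dist_zero_left, add_sub_cancel_left]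
            rw [heq]
            exact (hi2 s hsIcc).le
        _ = ε := by ring
    have := smul_integral_mem hKconv hKc hlt hint hmem
    have h2r : t + r - (t - r) = 2*r := by ring
    rwa [h2r] at this
  -- conclude
  have hwt : w t ∈ Kset := by
    apply hKc.mem_of_tendsto htend
    filter_upwards [Ioc_mem_nhdsGT_of_mem ⟨le_refl (0:ℝ), hr0⟩] with r hr
    exact key r hr.1 hr.2
  rwa [hw, indicator_of_mem htIcc] at hwt

lemma sum_ite_eq_of_iff {m j : ℕ} (P : ℕ → Prop) [DecidablePred P]
    (hjm : j ≤ m) (h : ∀ k < m, (P k ↔ k < j)) :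
    (∑ k ∈ Finset.range m, if P k then 1 else 0) = j := by
  have heq : Finset.filter P (Finset.range m) = Finset.range j := by
    ext k
    simp only [Finset.mem_filter, Finset.mem_range]
    constructor
    · rintro ⟨h1, h2⟩; exact (h k h1).1 h2
    · intro hk; exact ⟨hk.trans_le hjm, (h k (hk.trans_le hjm)).2 hk⟩
  rw [← Finset.card_filter, heq, Finset.card_range]

theorem kras_main (f : E n → E n) {T : ℝ} (hT : 0 < T) {x : ℝ → E n}
    (M δ₀ : ℝ) (hM1 : 1 ≤ M)
    (hM : ∀ z ∈ Metric.cthickening 1 (x '' Icc (0:ℝ) T), ‖f z‖ ≤ M)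
    (v : ℝ → E n) (hvI : IntervalIntegrable v volume 0 T)
    (hvid : ∀ t ∈ Icc (0:ℝ) T, x t = x 0 + ∫ s in (0:ℝ)..t, v s)
    (hvmem : ∀ᵐ t ∂(volume.restrict (Icc (0:ℝ) T)), v t ∈ FK f (x t))
    (ε : ℝ) (hε : 0 < ε) (hε1 : ε ≤ 1) (hδ₀ : 0 < δ₀)
    (hucont : ∀ u ∈ Icc (0:ℝ) T, ∀ t ∈ Icc (0:ℝ) T, dist u t < δ₀ → dist (x u) (x t) < ε/8) :
    ∃ (y e wf : ℝ → E n), Measurable e ∧ IntervalIntegrable wf volume 0 T ∧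
      (∀ t ∈ Icc (0:ℝ) T, y t = y 0 + ∫ s in (0:ℝ)..t, wf s) ∧
      (∀ t, wf t = f (y t + e t)) ∧
      (∀ t ∈ Icc (0:ℝ) T, dist (y t) (x t) ≤ ε ∧ dist (e t) 0 ≤ ε) := by
  have hMpos : (0:ℝ) < M := lt_of_lt_of_le one_pos hM1
  set η : ℝ := ε/8 with hηdef
  have hη : 0 < η := by positivity
  set β : ℝ := ε/(8*(T+1)) with hβdef
  have hβ : 0 < β := by positivity
  set K1 := Metric.cthickening 1 (x '' Icc (0:ℝ) T) with hK1def
  have hball : ∀ t ∈ Icc (0:ℝ) T, ∀ z : E n, dist z (x t) ≤ 1 → z ∈ K1 := by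
    intro t ht z hz
    exact Metric.mem_cthickening_of_dist_le z (x t) 1 _ (mem_image_of_mem x ht) hz
  have hvbd : ∀ᵐ t ∂(volume.restrict (Icc (0:ℝ) T)), ‖v t‖ ≤ M := by
    filter_upwards [hvmem, ae_restrict_mem measurableSet_Icc] with t h1 h2
    have h3 : v t ∈ closure (convexHull ℝ (f '' closedBall (x t) 1)) :=
      FK_subset f (x t) h1 one_pos
    have h4 : f '' closedBall (x t) 1 ⊆ closedBall 0 M := by
      rintro - ⟨z, hz, rfl⟩
      rw [mem_closedBall_zero_iff]
      exact hM z (hball t h2 z (by rwa [mem_closedBall] at hz))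
    have h5 : closure (convexHull ℝ (f '' closedBall (x t) 1)) ⊆ closedBall 0 M :=
      closure_minimal (convexHull_min h4 (convex_closedBall _ _)) Metric.isClosed_closedBall
    exact mem_closedBall_zero_iff.mp (h5 h3)
  -- choice of N, δ, partition a
  have hmin : 0 < min δ₀ (ε/(8*M)) := lt_min hδ₀ (by positivity)
  obtain ⟨N, hN⟩ := exists_nat_gt (T / min δ₀ (ε/(8*M)))
  have hNpos : 0 < (N:ℝ) := lt_trans (by positivity) hN
  have hN0 : 0 < N := by exact_mod_cast hNpos
  set δ : ℝ := T / N with hδdef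
  have hδpos : 0 < δ := by positivity
  have hδlt : δ < min δ₀ (ε/(8*M)) := by
    rw [hδdef, div_lt_iff₀ hNpos]
    calc T = (T / min δ₀ (ε/(8*M))) * min δ₀ (ε/(8*M)) := by field_simp
      _ < N * min δ₀ (ε/(8*M)) := by
          apply mul_lt_mul_of_pos_right hN hmin
      _ = min δ₀ (ε/(8*M)) * N := by ring
  have hδδ₀ : δ < δ₀ := lt_of_lt_of_le hδlt (min_le_left _ _)
  have hδM : δ ≤ ε/(8*M) := le_of_lt (lt_of_lt_of_le hδlt (min_le_right _ _))
  set a : ℕ → ℝ := fun j => j * δ with hadef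
  have ha0 : a 0 = 0 := by simp [hadef]
  have haN : a N = T := by
    show (N:ℝ) * (T / N) = T
    field_simp
  have hasucc : ∀ j : ℕ, a (j+1) = a j + δ := by
    intro j; simp only [hadef]; push_cast; ring
  have haIcc : ∀ j, j ≤ N → a j ∈ Icc (0:ℝ) T := by
    intro j hj
    constructor
    · positivity
    · rw [← haN, hadef]
      exact mul_le_mul_of_nonneg_right (by exact_mod_cast hj) hδpos.le
  -- averages
  set vbar : ℕ → E n := fun j => δ⁻¹ • ∫ s in (a j)..(a (j+1)), v s with hvbardef
  have hIocsub : ∀ j, j < N → Ioc (a j) (a (j+1)) ⊆ Icc (0:ℝ) T := by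
    intro j hj
    refine Ioc_subset_Icc_self.trans (Icc_subset_Icc (haIcc j hj.le).1 (haIcc (j+1) hj).2)
  have hvint : IntegrableOn v (Ioc (0:ℝ) T) :=
    (intervalIntegrable_iff_integrableOn_Ioc_of_le hT.le).mp hvI
  have hvintj : ∀ j, j < N → IntegrableOn v (Ioc (a j) (a (j+1))) := by
    intro j hj
    exact hvint.mono_set (Ioc_subset_Ioc (haIcc j hj.le).1 (haIcc (j+1) hj).2)
  have hab : ∀ j : ℕ, a j < a (j+1) := fun j => by rw [hasucc]; linarith
  have claimA : ∀ j, j < N →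
      vbar j ∈ closure (convexHull ℝ (f '' closedBall (x (a j)) (2*η))) := by
    intro j hj
    have h := smul_integral_mem
      (s := closure (convexHull ℝ (f '' closedBall (x (a j)) (2*η))))
      ((convex_convexHull ℝ _).closure) isClosed_closure (hab j) (hvintj j hj) ?_
    · have : a (j+1) - a j = δ := by rw [hasucc]; ring
      rwa [this] at h
    · filter_upwards [ae_restrict_of_ae_restrict_of_subset (hIocsub j hj) hvmem,
        ae_restrict_mem measurableSet_Ioc] with t h1 h2
      have h3 : v t ∈ closure (convexHull ℝ (f '' closedBall (x t) η)) :=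
        FK_subset f (x t) h1 hη
      have hsub : closedBall (x t) η ⊆ closedBall (x (a j)) (2*η) := by
        apply closedBall_subset_closedBall'
        have htT : t ∈ Icc (0:ℝ) T := hIocsub j hj h2
        have hd : dist t (a j) < δ₀ := by
          rw [Real.dist_eq, abs_lt]
          have := hasucc j
          cases h2; constructor <;> linarith
        have := hucont t htT (a j) (haIcc j hj.le) hd
        calc η + dist (x t) (x (a j)) ≤ η + η := by linarith
          _ = 2*η := by ring
      exact closure_mono (convexHull_mono (Set.image_mono hsub)) h3
  -- the convex combination data
  have claimB : ∀ j : ℕ, ∃ (m : ℕ) (wt : ℕ → ℝ) (pt : ℕ → E n), 0 < m ∧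
      (∀ k < m, 0 ≤ wt k) ∧ (∑ k ∈ Finset.range m, wt k) = 1 ∧
      (∀ k < m, pt k ∈ closedBall (x (a (min j (N-1)))) (2*η)) ∧
      (j < N → ‖(∑ k ∈ Finset.range m, wt k • f (pt k)) - vbar j‖ ≤ β) := by
    intro j
    by_cases hj : j < N
    · obtain ⟨p, hp, hdist⟩ := Metric.mem_closure_iff.mp (claimA j hj) β hβ
      obtain ⟨m, wt, z, hm, hwz, hsum, hzsum⟩ := exists_rep hp
      have hmin_eq : min j (N-1) = j := min_eq_left (Nat.le_sub_one_of_lt hj)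
      have hpre : ∀ k, ∃ q : E n, k < m →
          q ∈ closedBall (x (a j)) (2*η) ∧ f q = z k := by
        intro k
        by_cases hk : k < m
        · obtain ⟨q, hq1, hq2⟩ := (hwz k hk).2
          exact ⟨q, fun _ => ⟨hq1, hq2⟩⟩
        · exact ⟨x 0, fun h => absurd h hk⟩
      choose pt hpt using hpre
      refine ⟨m, wt, pt, hm, fun k hk => (hwz k hk).1, hsum, ?_, fun _ => ?_⟩
      · intro k hk
        rw [hmin_eq]
        exact (hpt k hk).1
      · have hsum2 : ∑ k ∈ Finset.range m, wt k • f (pt k) = p := by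
          rw [← hzsum]
          apply Finset.sum_congr rfl
          intro k hk
          rw [(hpt k (Finset.mem_range.mp hk)).2]
        rw [hsum2]
        have : ‖p - vbar j‖ = dist (vbar j) p := by rw [dist_comm, dist_eq_norm]
        rw [this]
        exact hdist.le
    · exact ⟨1, fun _ => 1, fun _ => x (a (min j (N-1))), one_pos, fun _ _ => zero_le_one,
        by simp, fun k _ => mem_closedBall_self (by positivity), fun h => absurd h hj⟩
  choose mJ wtJ ptJ hmJ hwtJ hsumJ hptJ happrox using claimB
  -- offsets and global indexing
  set o : ℕ → ℕ := fun j => ∑ j' ∈ Finset.range j, mJ j' with hodef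
  have hosucc : ∀ j, o (j+1) = o j + mJ j := fun j => Finset.sum_range_succ _ _
  have homono : Monotone o := fun j1 j2 h =>
    Finset.sum_le_sum_of_subset (Finset.range_subset_range.2 h)
  set L : ℕ := o N with hLdef
  have hblockex : ∀ Nb k, k < o Nb → ∃ j < Nb, o j ≤ k ∧ k < o (j+1) := by
    intro Nb
    induction Nb with
    | zero => intro k hk; simp [hodef] at hk
    | succ Nb ih =>
      intro k hk
      by_cases h : k < o Nb
      · obtain ⟨j, hj, h1, h2⟩ := ih k h
        exact ⟨j, hj.trans (Nat.lt_succ_self _), h1, h2⟩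
      · exact ⟨Nb, Nat.lt_succ_self _, not_lt.mp h, hk⟩
  set blk : ℕ → ℕ := fun k => ∑ j ∈ Finset.range N, if o (j+1) ≤ k then 1 else 0 with hblkdef
  have hblk : ∀ j, j < N → ∀ k, o j ≤ k → k < o (j+1) → blk k = j := by
    intro j hj k h1 h2
    apply sum_ite_eq_of_iff _ hj.le
    intro j' _
    constructor
    · intro h
      by_contra hcon
      have : o (j+1) ≤ o (j'+1) := homono (by omega)
      omega
    · intro h
      exact le_trans (homono (by omega)) h1
  have hblkL : ∀ k, L ≤ k → blk k = N := by
    intro k hk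
    apply sum_ite_eq_of_iff _ le_rfl
    intro j' hj'
    exact ⟨fun _ => hj', fun _ => le_trans (homono hj') (by omega)⟩
  set gw : ℕ → ℝ := fun k => δ * wtJ (blk k) (k - o (blk k)) with hgwdef
  set gz : ℕ → E n := fun k => ptJ (blk k) (k - o (blk k)) with hgzdef
  have hgw0 : ∀ k, k < L → 0 ≤ gw k := by
    intro k hk
    obtain ⟨j, hj, h1, h2⟩ := hblockex N k (by omega)
    have hb := hblk j hj k h1 h2
    have hlt : k - o j < mJ j := by have := hosucc j; omega
    simp only [hgwdef, hb]
    exact mul_nonneg hδpos.le (hwtJ j _ hlt)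
  set sq : ℕ → ℝ := fun k => ∑ k' ∈ Finset.range k, gw k' with hsqdef
  have hsqsucc : ∀ k, sq (k+1) = sq k + gw k := fun k => Finset.sum_range_succ _ _
  have hsq0 : sq 0 = 0 := by simp [hsqdef]
  have hsqmono : ∀ k1 k2, k1 ≤ k2 → k2 ≤ L → sq k1 ≤ sq k2 := by
    intro k1 k2 h hL
    apply Finset.sum_le_sum_of_subset_of_nonneg (Finset.range_subset_range.2 h)
    intro k hk _
    exact hgw0 k (lt_of_lt_of_le (Finset.mem_range.mp hk) hL)
  have hblkval : ∀ j, j < N → ∀ k, k < mJ j →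
      gw (o j + k) = δ * wtJ j k ∧ gz (o j + k) = ptJ j k := by
    intro j hj k hk
    have hb := hblk j hj (o j + k) (Nat.le_add_right _ _) (by rw [hosucc]; omega)
    constructor
    · simp only [hgwdef, hb, Nat.add_sub_cancel_left]
    · simp only [hgzdef, hb, Nat.add_sub_cancel_left]
  have hsq_o : ∀ j, j ≤ N → sq (o j) = a j := by
    intro j hj
    induction j with
    | zero => simp [hsqdef, hodef, ha0]
    | succ j ih =>
      have hjN : j < N := hj
      have hsum : ∑ k ∈ Finset.range (mJ j), gw (o j + k) = δ := by
        have h1 : ∀ k ∈ Finset.range (mJ j), gw (o j + k) = δ * wtJ j k := by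
          intro k hk
          exact (hblkval j hjN k (Finset.mem_range.mp hk)).1
        rw [Finset.sum_congr rfl h1, ← Finset.mul_sum, hsumJ j, mul_one]
      calc sq (o (j+1)) = ∑ k ∈ Finset.range (o j + mJ j), gw k := by rw [hosucc]
        _ = sq (o j) + ∑ k ∈ Finset.range (mJ j), gw (o j + k) := by
            rw [Finset.sum_range_add]
        _ = a j + δ := by rw [ih (by omega), hsum]
        _ = a (j+1) := (hasucc j).symm
  have hsqL : sq L = T := by
    have := hsq_o N le_rfl
    rw [haN] at this
    exact this
  -- index function
  set idx : ℝ → ℕ := fun t => ∑ k ∈ Finset.range L, if sq (k+1) ≤ t then 1 else 0 with hidxdef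
  have hidx : ∀ k, k < L → ∀ t : ℝ, sq k ≤ t → t < sq (k+1) → idx t = k := by
    intro k hk t h1 h2
    apply sum_ite_eq_of_iff _ hk.le
    intro k' _
    constructor
    · intro h
      by_contra hcon
      have : sq (k+1) ≤ sq (k'+1) := hsqmono _ _ (by omega) (by omega)
      linarith
    · intro h
      exact le_trans (hsqmono _ _ (by omega) (by omega)) h1
  have hidxL : ∀ t : ℝ, sq L ≤ t → idx t = L := by
    intro t ht
    apply sum_ite_eq_of_iff _ le_rfl
    intro k' hk'
    exact ⟨fun _ => hk', fun _ => le_trans (hsqmono _ _ (by omega) le_rfl) ht⟩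
  have hidxle : ∀ t : ℝ, idx t ≤ L := by
    intro t
    calc idx t ≤ ∑ _k ∈ Finset.range L, 1 :=
          Finset.sum_le_sum (fun k _ => by split <;> omega)
      _ = L := by simp
  -- membership of the chattering points
  have h2η1 : 2*η ≤ 1 := by rw [hηdef]; linarith
  have hptK1 : ∀ j, ∀ k, k < mJ j → ptJ j k ∈ K1 := by
    intro j k hk
    have h1 := hptJ j k hk
    have h2 : min j (N-1) ≤ N := le_trans (min_le_right _ _) (Nat.sub_le _ _)
    apply hball (a (min j (N-1))) (haIcc _ h2)
    rw [mem_closedBall] at h1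
    exact h1.trans h2η1
  have hgzK1 : ∀ k, k ≤ L → gz k ∈ K1 := by
    intro k hk
    rcases lt_or_eq_of_le hk with h | h
    · obtain ⟨j, hj, h1, h2⟩ := hblockex N k (by omega)
      have hb := hblk j hj k h1 h2
      simp only [hgzdef, hb]
      exact hptK1 j _ (by have := hosucc j; omega)
    · subst h
      have hb := hblkL L le_rfl
      have hs : L - o N = 0 := by omega
      simp only [hgzdef, hb, hs]
      exact hptK1 N 0 (hmJ N)
  -- the approximating objects
  set c : ℝ → E n := fun t => gz (idx t) with hcdef
  set wf : ℝ → E n := fun t => f (gz (idx t)) with hwfdef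
  have hidxm : Measurable idx := by
    apply Finset.measurable_sum
    intro k _
    exact Measurable.ite measurableSet_Ici measurable_const measurable_const
  have hcm : Measurable c := (measurable_from_top (f := gz)).comp hidxm
  have hwfm : Measurable wf := (measurable_from_top (f := fun k => f (gz k))).comp hidxm
  have hwfb : ∀ t, ‖wf t‖ ≤ M := fun t => hM _ (hgzK1 _ (hidxle t))
  have hwfIall : ∀ p q : ℝ, IntervalIntegrable wf volume p q := by
    intro p q
    apply IntervalIntegrable.mono_fun' (g := fun _ => M) intervalIntegrable_const
    · exact hwfm.aestronglyMeasurable.restrict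
    · exact ae_restrict_of_ae (ae_of_all _ hwfb)
  set y : ℝ → E n := fun t => x 0 + ∫ s in (0:ℝ)..t, wf s with hydef
  set e : ℝ → E n := fun t => c t - y t with hedef
  have hyc : Continuous y :=
    continuous_const.add (intervalIntegral.continuous_primitive (fun a b => hwfIall a b) 0)
  have hem : Measurable e := hcm.sub hyc.measurable
  have hy0 : y 0 = x 0 := by simp [hydef]
  have hweq : ∀ t, wf t = f (y t + e t) := by
    intro t
    have h1 : y t + e t = c t := by simp only [hedef]; abel
    rw [h1]
  -- step integrals
  have hstep : ∀ k, k < L → ∫ s in (sq k)..(sq (k+1)), wf s = gw k • f (gz k) := by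
    intro k hk
    have hle : sq k ≤ sq (k+1) := hsqmono _ _ (Nat.le_succ _) (by omega)
    rw [intervalIntegral.integral_of_le hle]
    have h0 : (volume : Measure ℝ) {sq (k+1)} = 0 := measure_singleton _
    have hae : ∀ᵐ t ∂(volume : Measure ℝ), t ∈ Ioc (sq k) (sq (k+1)) → wf t = f (gz k) := by
      filter_upwards [compl_mem_ae_iff.2 h0] with t hne ht
      have h2 : t < sq (k+1) := lt_of_le_of_ne ht.2 (by simpa using hne)
      simp only [hwfdef, hidx k hk t (le_of_lt ht.1) h2]
    rw [setIntegral_congr_ae measurableSet_Ioc hae, setIntegral_const, Real.volume_real_Ioc_of_le hle]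
    congr 1
    rw [hsqsucc]; ring
  have hadj : ∀ m, m ≤ L →
      ∫ s in (0:ℝ)..(sq m), wf s = ∑ k ∈ Finset.range m, gw k • f (gz k) := by
    intro m hm
    have h := intervalIntegral.sum_integral_adjacent_intervals (a := sq) (μ := volume)
      (n := m) (fun k _ => hwfIall _ _)
    rw [hsq0] at h
    rw [← h]
    exact Finset.sum_congr rfl fun k hk =>
      hstep k (lt_of_lt_of_le (Finset.mem_range.mp hk) hm)
  have hgroup : ∀ j, j ≤ N → ∑ k ∈ Finset.range (o j), gw k • f (gz k)
      = ∑ j' ∈ Finset.range j, δ • ∑ k ∈ Finset.range (mJ j'), wtJ j' k • f (ptJ j' k) := by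
    intro j hj
    induction j with
    | zero => simp [hodef]
    | succ j ih =>
      have hjN : j < N := hj
      have hblock : ∑ k ∈ Finset.range (mJ j), gw (o j + k) • f (gz (o j + k))
          = δ • ∑ k ∈ Finset.range (mJ j), wtJ j k • f (ptJ j k) := by
        rw [Finset.smul_sum]
        apply Finset.sum_congr rfl
        intro k hk
        obtain ⟨e1, e2⟩ := hblkval j hjN k (Finset.mem_range.mp hk)
        rw [e1, e2, smul_smul]
      calc ∑ k ∈ Finset.range (o (j+1)), gw k • f (gz k)
          = ∑ k ∈ Finset.range (o j + mJ j), gw k • f (gz k) := by rw [hosucc]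
        _ = (∑ k ∈ Finset.range (o j), gw k • f (gz k))
            + ∑ k ∈ Finset.range (mJ j), gw (o j + k) • f (gz (o j + k)) := by
            rw [Finset.sum_range_add]
        _ = _ := by rw [ih (by omega), hblock, Finset.sum_range_succ]
  have hvIj : ∀ p q : ℝ, p ∈ Icc (0:ℝ) T → q ∈ Icc (0:ℝ) T →
      IntervalIntegrable v volume p q := by
    intro p q hp hq
    apply hvI.mono_set
    rw [uIcc_of_le hT.le]
    exact uIcc_subset_Icc hp hq
  have hvadj : ∀ j, j ≤ N → ∫ s in (0:ℝ)..(a j), v s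
      = ∑ j' ∈ Finset.range j, ∫ s in (a j')..(a (j'+1)), v s := by
    intro j hj
    have h := intervalIntegral.sum_integral_adjacent_intervals (a := a) (μ := volume) (n := j)
      (fun k hk => hvIj _ _ (haIcc k (by omega)) (haIcc (k+1) (by omega)))
    rw [ha0] at h
    exact h.symm
  have hvδ : ∀ j', j' < N → ∫ s in (a j')..(a (j'+1)), v s = δ • vbar j' := by
    intro j' _
    simp only [hvbardef]
    rw [smul_smul, mul_inv_cancel₀ (ne_of_gt hδpos), one_smul]
  have herr : ∀ j, j ≤ N →
      ‖(∫ s in (0:ℝ)..(a j), wf s) - ∫ s in (0:ℝ)..(a j), v s‖ ≤ (j:ℝ) * (δ * β) := by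
    intro j hj
    have h1 : ∫ s in (0:ℝ)..(a j), wf s
        = ∑ j' ∈ Finset.range j, δ • ∑ k ∈ Finset.range (mJ j'), wtJ j' k • f (ptJ j' k) := by
      rw [← hsq_o j hj, hadj (o j) (homono hj)]
      exact hgroup j hj
    rw [h1, hvadj j hj, ← Finset.sum_sub_distrib]
    calc ‖∑ j' ∈ Finset.range j, ((δ • ∑ k ∈ Finset.range (mJ j'), wtJ j' k • f (ptJ j' k))
            - ∫ s in (a j')..(a (j'+1)), v s)‖
        ≤ ∑ j' ∈ Finset.range j, ‖(δ • ∑ k ∈ Finset.range (mJ j'), wtJ j' k • f (ptJ j' k))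
            - ∫ s in (a j')..(a (j'+1)), v s‖ := norm_sum_le _ _
      _ ≤ ∑ _j' ∈ Finset.range j, δ * β := by
          apply Finset.sum_le_sum
          intro j' hj'
          have hj'N : j' < N := lt_of_lt_of_le (Finset.mem_range.mp hj') hj
          rw [hvδ j' hj'N, ← smul_sub, norm_smul, Real.norm_eq_abs, abs_of_pos hδpos]
          exact mul_le_mul_of_nonneg_left (happrox j' hj'N) hδpos.le
      _ = (j:ℝ) * (δ * β) := by rw [Finset.sum_const, Finset.card_range, nsmul_eq_mul]
  -- the two final bounds
  have hTβ : T * β ≤ ε/8 := by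
    rw [hβdef, mul_div_assoc']
    rw [div_le_div_iff₀ (by positivity) (by norm_num)]
    nlinarith [hε.le, hT.le]
  have hMδ : M * δ ≤ ε/8 := by
    have hM0 : M ≠ 0 := ne_of_gt hMpos
    calc M * δ ≤ M * (ε/(8*M)) := mul_le_mul_of_nonneg_left hδM hMpos.le
      _ = ε/8 := by field_simp
  have hyx : ∀ t ∈ Icc (0:ℝ) T, ‖y t - x t‖ ≤ 3*(ε/8) := by
    intro t ht
    have hjex : ∃ j, j < N ∧ a j ≤ t ∧ t ≤ a (j+1) := by
      rcases lt_or_eq_of_le ht.2 with h | h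
      · obtain ⟨j, hj, h1, h2⟩ := find_piece a N t (by rw [ha0]; exact ht.1) (by rwa [haN])
        exact ⟨j, hj, h1, h2.le⟩
      · have hNe : N - 1 + 1 = N := Nat.succ_pred_eq_of_pos hN0
        refine ⟨N-1, by omega, ?_, ?_⟩
        · rw [h, ← haN]
          exact mul_le_mul_of_nonneg_right (by exact_mod_cast Nat.sub_le N 1) hδpos.le
        · rw [h, hNe, haN]
    obtain ⟨j, hjN, hj1, hj2⟩ := hjex
    have hyt : y t - x t = ((∫ s in (0:ℝ)..(a j), wf s) - ∫ s in (0:ℝ)..(a j), v s)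
        + ((∫ s in (a j)..t, wf s) - ∫ s in (a j)..t, v s) := by
      simp only [hydef]
      rw [hvid t ht]
      have e1 : (∫ s in (0:ℝ)..(a j), wf s) + ∫ s in (a j)..t, wf s
          = ∫ s in (0:ℝ)..t, wf s :=
        intervalIntegral.integral_add_adjacent_intervals (hwfIall _ _) (hwfIall _ _)
      have e2 : (∫ s in (0:ℝ)..(a j), v s) + ∫ s in (a j)..t, v s
          = ∫ s in (0:ℝ)..t, v s :=
        intervalIntegral.integral_add_adjacent_intervals
          (hvIj _ _ ⟨le_rfl, hT.le⟩ (haIcc j hjN.le)) (hvIj _ _ (haIcc j hjN.le) ht)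
      rw [← e1, ← e2]
      abel
    have hb1 : ‖(∫ s in (0:ℝ)..(a j), wf s) - ∫ s in (0:ℝ)..(a j), v s‖ ≤ ε/8 := by
      calc ‖(∫ s in (0:ℝ)..(a j), wf s) - ∫ s in (0:ℝ)..(a j), v s‖
          ≤ (j:ℝ) * (δ * β) := herr j hjN.le
        _ ≤ (N:ℝ) * (δ * β) := by
            apply mul_le_mul_of_nonneg_right _ (by positivity)
            exact_mod_cast hjN.le
        _ = T * β := by rw [hδdef]; field_simp
        _ ≤ ε/8 := hTβ
    have habs : |t - a j| ≤ δ := by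
      rw [abs_le]
      have := hasucc j
      constructor <;> linarith
    have hb2 : ‖∫ s in (a j)..t, wf s‖ ≤ ε/8 := by
      calc ‖∫ s in (a j)..t, wf s‖ ≤ M * |t - a j| :=
            intervalIntegral.norm_integral_le_of_norm_le_const (fun s _ => hwfb s)
        _ ≤ M * δ := mul_le_mul_of_nonneg_left habs hMpos.le
        _ ≤ ε/8 := hMδ
    have hb3 : ‖∫ s in (a j)..t, v s‖ ≤ ε/8 := by
      have hIsub : Set.uIoc (a j) t ⊆ Icc (0:ℝ) T := by
        rw [uIoc_of_le hj1]
        exact Ioc_subset_Icc_self.trans (Icc_subset_Icc (haIcc j hjN.le).1 ht.2)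
      have hbd : ∀ᵐ s ∂(volume.restrict (Set.uIoc (a j) t)), ‖v s‖ ≤ (fun _ => M) s :=
        ae_restrict_of_ae_restrict_of_subset hIsub hvbd
      calc ‖∫ s in (a j)..t, v s‖ ≤ |∫ s in (a j)..t, (M : ℝ)| :=
            intervalIntegral.norm_integral_le_abs_of_norm_le hbd intervalIntegrable_const
        _ = |(t - a j) * M| := by rw [intervalIntegral.integral_const, smul_eq_mul]
        _ = |t - a j| * M := by rw [abs_mul, abs_of_pos hMpos]
        _ ≤ δ * M := mul_le_mul_of_nonneg_right habs hMpos.le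
        _ ≤ ε/8 := by rw [mul_comm]; exact hMδ
    calc ‖y t - x t‖ ≤ ‖(∫ s in (0:ℝ)..(a j), wf s) - ∫ s in (0:ℝ)..(a j), v s‖
          + ‖(∫ s in (a j)..t, wf s) - ∫ s in (a j)..t, v s‖ := by
          rw [hyt]; exact norm_add_le _ _
      _ ≤ ε/8 + (‖∫ s in (a j)..t, wf s‖ + ‖∫ s in (a j)..t, v s‖) :=
          add_le_add hb1 (norm_sub_le _ _)
      _ ≤ ε/8 + (ε/8 + ε/8) := by linarith
      _ = 3*(ε/8) := by ring
  have hcx : ∀ t ∈ Icc (0:ℝ) T, ‖c t - x t‖ ≤ 3*η := by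
    intro t ht
    have hkey : ∃ j, j < N ∧ c t ∈ closedBall (x (a j)) (2*η) ∧ a j ≤ t ∧ t ≤ a (j+1) := by
      rcases lt_or_eq_of_le ht.2 with hlt | heq
      · obtain ⟨k, hkL, hk1, hk2⟩ := find_piece sq L t (by rw [hsq0]; exact ht.1)
          (by rw [hsqL]; exact hlt)
        have hik : idx t = k := hidx k hkL t hk1 hk2
        obtain ⟨j, hjN, hj1, hj2⟩ := hblockex N k (by omega)
        have hb := hblk j hjN k hj1 hj2
        refine ⟨j, hjN, ?_, ?_, ?_⟩
        · simp only [hcdef, hik, hgzdef, hb]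
          have hmin_eq : min j (N-1) = j := min_eq_left (by omega)
          have h := hptJ j (k - o j) (by have := hosucc j; omega)
          rwa [hmin_eq] at h
        · calc a j = sq (o j) := (hsq_o j hjN.le).symm
            _ ≤ sq k := hsqmono _ _ hj1 (by omega)
            _ ≤ t := hk1
        · calc t ≤ sq (k+1) := hk2.le
            _ ≤ sq (o (j+1)) := hsqmono _ _ (by omega) (homono hjN)
            _ = a (j+1) := hsq_o (j+1) hjN
      · have hNe : N - 1 + 1 = N := Nat.succ_pred_eq_of_pos hN0
        have hidxT : idx t = L := hidxL t (le_of_eq (by rw [hsqL, heq]))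
        refine ⟨N-1, by omega, ?_, ?_, ?_⟩
        · have hs : L - o N = 0 := by omega
          have hb := hblkL L le_rfl
          simp only [hcdef, hidxT, hgzdef, hb, hs]
          have hmin_eq : min N (N-1) = N-1 := min_eq_right (Nat.sub_le _ _)
          have h := hptJ N 0 (hmJ N)
          rwa [hmin_eq] at h
        · rw [heq, ← haN]
          exact mul_le_mul_of_nonneg_right (by exact_mod_cast Nat.sub_le N 1) hδpos.le
        · rw [heq, hNe, haN]
    obtain ⟨j, hjN, hcball, hj1, hj2⟩ := hkey
    have habs : |t - a j| ≤ δ := by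
      rw [abs_le]
      have := hasucc j
      constructor <;> linarith
    have hxd : dist (x (a j)) (x t) < η := by
      refine hucont (a j) (haIcc j hjN.le) t ht ?_
      rw [Real.dist_eq, abs_sub_comm]
      exact lt_of_le_of_lt habs hδδ₀
    calc ‖c t - x t‖ = dist (c t) (x t) := (dist_eq_norm _ _).symm
      _ ≤ dist (c t) (x (a j)) + dist (x (a j)) (x t) := dist_triangle _ _ _
      _ ≤ 2*η + η := add_le_add (mem_closedBall.mp hcball) hxd.le
      _ = 3*η := by ring
  refine ⟨y, e, wf, hem, hwfIall 0 T, ?_, hweq, ?_⟩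
  · intro t _
    rw [hy0]
  · intro t ht
    constructor
    · rw [dist_eq_norm]
      calc ‖y t - x t‖ ≤ 3*(ε/8) := hyx t ht
        _ ≤ ε := by linarith
    · rw [dist_zero_right]
      have h1 : e t = (c t - x t) + (x t - y t) := by simp only [hedef]; abel
      calc ‖e t‖ ≤ ‖c t - x t‖ + ‖x t - y t‖ := by rw [h1]; exact norm_add_le _ _
        _ ≤ 3*η + 3*(ε/8) := by
            refine add_le_add (hcx t ht) ?_
            rw [norm_sub_rev]
            exact hyx t ht
        _ ≤ ε := by rw [hηdef]; linarith


end Statement16Aux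

/-- Lemma 1 of the paper; Thm. 4.3 in Goebel–Sanfelice–Teel:
for a locally bounded vector field, Hermes solutions and Krasovskii solutions of
`ẋ = f(x)` coincide. -/
theorem statement16
    {n : ℕ} (f : E n → E n)
    (hf : ∀ x : E n, ∃ U ∈ 𝓝 x, Bornology.IsBounded (f '' U))
    (T : ℝ) (hT : 0 < T)
    (x : ℝ → E n) (hx : IsACOn T x) :
    IsHermesSol f T x ↔ IsKrasSol f T x := by
  constructor
  · intro hh
    obtain ⟨v, hvI, hvid⟩ := hx
    obtain ⟨xs, es, hmeas, hsol, hxsu, hesu⟩ := hh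
    exact ⟨v, hvI, hvid, hermes_to_kras f hT v hvI hvid xs es hsol hxsu hesu⟩
  · intro hk
    obtain ⟨v, hvI, hvid, hvmem⟩ := hk
    have hxc : ContinuousOn x (Icc 0 T) := contOn_primitive hT.le hvI hvid
    have hKTc : IsCompact (x '' Icc (0:ℝ) T) := isCompact_Icc.image_of_continuousOn hxc
    have hK1c : IsCompact (Metric.cthickening 1 (x '' Icc (0:ℝ) T)) := hKTc.cthickening
    obtain ⟨M0, hM0⟩ := bound_on_compact f hf hK1c
    set M := max M0 1 with hMdef
    have hM1 : 1 ≤ M := le_max_right _ _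
    have hM : ∀ z ∈ Metric.cthickening 1 (x '' Icc (0:ℝ) T), ‖f z‖ ≤ M :=
      fun z hz => (hM0 z hz).trans (le_max_left _ _)
    have hunif : UniformContinuousOn x (Icc 0 T) :=
      isCompact_Icc.uniformContinuousOn_of_continuous hxc
    set εi : ℕ → ℝ := fun i => min 1 (1/((i:ℝ)+1)) with hεidef
    have hεpos : ∀ i, 0 < εi i := fun i => lt_min one_pos (by positivity)
    have hεle1 : ∀ i, εi i ≤ 1 := fun i => min_le_left _ _
    have main : ∀ i : ℕ, ∃ (y e wf : ℝ → E n),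
        Measurable e ∧ IntervalIntegrable wf volume 0 T ∧
        (∀ t ∈ Icc (0:ℝ) T, y t = y 0 + ∫ s in (0:ℝ)..t, wf s) ∧
        (∀ t, wf t = f (y t + e t)) ∧
        (∀ t ∈ Icc (0:ℝ) T, dist (y t) (x t) ≤ εi i ∧ dist (e t) 0 ≤ εi i) := by
      intro i
      obtain ⟨δ₀, hδ₀, hδ₀'⟩ := Metric.uniformContinuousOn_iff.mp hunif ((εi i)/8)
        (by have := hεpos i; positivity)
      exact kras_main f hT M δ₀ hM1 hM v hvI hvid hvmem (εi i) (hεpos i) (hεle1 i) hδ₀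
        (fun u hu t ht hd => hδ₀' u hu t ht hd)
    choose ys es' wfs h1 h2 h3 h4 h5 using main
    refine ⟨ys, es', h1, fun i => ⟨wfs i, h2 i, h3 i, ae_of_all _ (h4 i)⟩, ?_, ?_⟩
    · rw [Metric.tendstoUniformlyOn_iff]
      intro ε' hε'
      obtain ⟨I, hI⟩ := exists_nat_gt (1/ε')
      filter_upwards [eventually_ge_atTop I] with i hi
      intro t ht
      have hlt : 1/((i:ℝ)+1) < ε' := by
        rw [div_lt_iff₀ (by positivity)]
        rw [div_lt_iff₀ hε'] at hI
        have hIle : (I:ℝ) ≤ i := by exact_mod_cast hi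
        nlinarith
      calc dist (x t) (ys i t) = dist (ys i t) (x t) := dist_comm _ _
        _ ≤ εi i := (h5 i t ht).1
        _ ≤ 1/((i:ℝ)+1) := min_le_right _ _
        _ < ε' := hlt
    · rw [Metric.tendstoUniformlyOn_iff]
      intro ε' hε'
      obtain ⟨I, hI⟩ := exists_nat_gt (1/ε')
      filter_upwards [eventually_ge_atTop I] with i hi
      intro t ht
      have hlt : 1/((i:ℝ)+1) < ε' := by
        rw [div_lt_iff₀ (by positivity)]
        rw [div_lt_iff₀ hε'] at hI
        have hIle : (I:ℝ) ≤ i := by exact_mod_cast hi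
        nlinarith
      calc dist 0 (es' i t) = dist (es' i t) 0 := dist_comm _ _
        _ ≤ εi i := (h5 i t ht).2
        _ ≤ 1/((i:ℝ)+1) := min_le_right _ _
        _ < ε' := hlt

end HS
end
end

section
/- Let D ⊆ ℝ^n, let g : ℝ^n → ℝ^n be locally bounded, let J ≥ 1 be an integer, and let x : {0,1,…,J} → ℝ^n. Then x is a Hermes solution of the constrained difference equation x ∈ D, x⁺ = g(x) if and only if x is a Krasovskii solution of the same system. -/
open Set Filter Metric MeasureTheory Topology
open scoped RealInnerProductSpace

noncomputable section

namespace HS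

variable {X Y : Type*}

/-- The discrete Krasovskii regularization of `g` relative to `D`. -/
def GK {n : ℕ} (g : E n → E n) (D : Set (E n)) (x : E n) : Set (E n) :=
  ⋂ ε ∈ Ioi (0:ℝ), closure (g '' (closedBall x ε ∩ D))

/-- Krasovskii solutions of the constrained difference equation `x ∈ D, x⁺ = g(x)`. -/
def IsKrasSolD {n : ℕ} (g : E n → E n) (D : Set (E n)) (J : ℕ) (x : ℕ → E n) : Prop :=
  ∀ j < J, x j ∈ closure D ∧ x (j+1) ∈ GK g D (x j)

/-- Hermes solutions of the constrained difference equation `x ∈ D, x⁺ = g(x)`. -/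
def IsHermesSolD {n : ℕ} (g : E n → E n) (D : Set (E n)) (J : ℕ) (x : ℕ → E n) : Prop :=
  ∃ (xs : ℕ → ℕ → E n) (es : ℕ → ℕ → E n),
    (∀ i, ∀ j < J, xs i j + es i j ∈ D ∧ xs i (j+1) = g (xs i j + es i j)) ∧
    TendstoUniformlyOn (fun i j => xs i j) x atTop {j : ℕ | j ≤ J} ∧
    TendstoUniformlyOn (fun i j => es i j) (fun _ => 0) atTop {j : ℕ | j < J}

/-- Pointwise convergence on a finite set implies uniform convergence. -/
lemma tuo_of_finite {α β : Type*} [MetricSpace β] {F : ℕ → α → β} {f : α → β} {s : Set α}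
    (hs : s.Finite) (h : ∀ a ∈ s, Tendsto (fun i => F i a) atTop (𝓝 (f a))) :
    TendstoUniformlyOn F f atTop s := by
  rw [Metric.tendstoUniformlyOn_iff]
  intro ε hε
  rw [eventually_all_finite hs]
  intro a ha
  filter_upwards [(h a ha) (Metric.ball_mem_nhds (f a) hε)] with i hi
  simp only [Set.mem_preimage, Metric.mem_ball] at hi
  rwa [dist_comm]

/-- Lemma 2 of the paper; Thm. 4.17 in Goebel–Sanfelice–Teel:
for a locally bounded `g`, discrete-time Hermes solutions and Krasovskii solutions
of `x ∈ D, x⁺ = g(x)` coincide. -/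
theorem statement17
    {n : ℕ} (D : Set (E n)) (g : E n → E n)
    (hg : ∀ x : E n, ∃ U ∈ 𝓝 x, Bornology.IsBounded (g '' U))
    (J : ℕ) (hJ : 1 ≤ J) (x : ℕ → E n) :
    IsHermesSolD g D J x ↔ IsKrasSolD g D J x := by
  constructor
  · rintro ⟨xs, es, hsol, hxs, hes⟩
    intro j hj
    have hxj : Tendsto (fun i => xs i j) atTop (𝓝 (x j)) := hxs.tendsto_at (le_of_lt hj)
    have hxj1 : Tendsto (fun i => xs i (j+1)) atTop (𝓝 (x (j+1))) := hxs.tendsto_at hj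
    have hej : Tendsto (fun i => es i j) atTop (𝓝 0) := hes.tendsto_at hj
    have hyj : Tendsto (fun i => xs i j + es i j) atTop (𝓝 (x j)) := by
      simpa using hxj.add hej
    constructor
    · exact mem_closure_of_tendsto hyj (Eventually.of_forall fun i => (hsol i j hj).1)
    · rw [GK, mem_iInter₂]
      intro ε hε
      apply mem_closure_of_tendsto hxj1
      have hev : ∀ᶠ i in atTop, xs i j + es i j ∈ closedBall (x j) ε :=
        hyj (Metric.closedBall_mem_nhds (x j) hε)
      filter_upwards [hev] with i hi
      rw [(hsol i j hj).2]
      exact mem_image_of_mem g ⟨hi, (hsol i j hj).1⟩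
  · intro hK
    have hchoice : ∀ i : ℕ, ∀ j, j < J → ∃ a : E n,
        a ∈ closedBall (x j) (1/(i+1)) ∩ D ∧ dist (x (j+1)) (g a) < 1/(i+1) := by
      intro i j hj
      have h1 : (0:ℝ) < 1/(i+1) := by positivity
      have h2 := (hK j hj).2
      rw [GK, mem_iInter₂] at h2
      have h3 := h2 (1/(i+1)) h1
      rw [Metric.mem_closure_iff] at h3
      obtain ⟨b, hb, hdb⟩ := h3 _ h1
      obtain ⟨a, ha, rfl⟩ := hb
      exact ⟨a, ha, hdb⟩
    choose! y hy1 hy2 using hchoice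
    set xs : ℕ → ℕ → E n := fun i => Nat.rec (x 0) (fun j _ => g (y i j)) with hxs
    have hxs0 : ∀ i, xs i 0 = x 0 := fun i => rfl
    have hxsS : ∀ i j, xs i (j+1) = g (y i j) := fun i j => rfl
    -- pointwise convergence of xs
    have hconv : ∀ j ∈ {j : ℕ | j ≤ J}, Tendsto (fun i => xs i j) atTop (𝓝 (x j)) := by
      intro j hj
      match j with
      | 0 => simp only [hxs0]; exact tendsto_const_nhds
      | (k+1) =>
        have hk : k < J := hj
        rw [tendsto_iff_dist_tendsto_zero]
        have hb : ∀ i : ℕ, dist (xs i (k+1)) (x (k+1)) ≤ 1/(i+1) := fun i => by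
          rw [hxsS, dist_comm]
          exact le_of_lt (hy2 i k hk)
        exact squeeze_zero (fun i => dist_nonneg) hb tendsto_one_div_add_atTop_nhds_zero_nat
    -- convergence of y i j to x j for j < J
    have hyconv : ∀ j, j < J → Tendsto (fun i => y i j) atTop (𝓝 (x j)) := by
      intro j hj
      rw [tendsto_iff_dist_tendsto_zero]
      have hb : ∀ i : ℕ, dist (y i j) (x j) ≤ 1/(i+1) := fun i =>
        Metric.mem_closedBall.mp (hy1 i j hj).1
      exact squeeze_zero (fun i => dist_nonneg) hb tendsto_one_div_add_atTop_nhds_zero_nat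
    refine ⟨xs, fun i j => y i j - xs i j, ?_, ?_, ?_⟩
    · intro i j hj
      constructor
      · have : xs i j + (y i j - xs i j) = y i j := by abel
        rw [this]; exact (hy1 i j hj).2
      · have : xs i j + (y i j - xs i j) = y i j := by abel
        rw [this, hxsS]
    · exact tuo_of_finite (Set.finite_Iic J) hconv
    · apply tuo_of_finite (Set.finite_Iio J)
      intro j hj
      have h1 := hyconv j hj
      have h2 := hconv j (show j ∈ {j : ℕ | j ≤ J} from le_of_lt (show j < J from hj))
      simpa using h1.sub h2

end HS
end
end

section
/- Let C ⊆ ℝ^n be closed and let F : ℝ^n ⇉ ℝ^n be OSC and LB relative to C with F(x) nonempty and convex for every x ∈ C. Then: (a) (Necessity) if x : [0,T] → ℝ^n, with T > 0, is a solution of the constrained differential inclusion ẋ ∈ F(x), x ∈ C, then F(x(0)) ∩ T_C(x(0)) ≠ ∅; and (b) (Sufficiency) if x₀ ∈ C admits a neighborhood U ⊆ ℝ^n such that F(x) ∩ T_C(x) ≠ ∅ for all x ∈ U ∩ C, then there exist T > 0 and a solution x : [0,T] → ℝ^n of ẋ ∈ F(x), x ∈ C, with x(0) = x₀. -/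
open Set Filter Metric MeasureTheory Topology
open scoped RealInnerProductSpace

noncomputable section

namespace HS

variable {X Y : Type*}

/-- Solutions of the constrained differential inclusion `ẋ ∈ F(x)`, `x ∈ C`,
on `[0,T]` (absolute continuity encoded via an integrable a.e. selection). -/
def IsDISol {n : ℕ} (F : E n → Set (E n)) (C : Set (E n)) (T : ℝ) (x : ℝ → E n) : Prop :=
  x 0 ∈ C ∧ ∃ v : ℝ → E n, IntervalIntegrable v volume 0 T ∧
    (∀ᵐ t ∂(volume.restrict (Icc (0:ℝ) T)), x t ∈ C ∧ v t ∈ F (x t)) ∧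
    ∀ t ∈ Icc (0:ℝ) T, x t = x 0 + ∫ s in (0:ℝ)..t, v s

/-- The (Bouligand) tangent cone of `S` at `x`: limits of `(x_i − x)/τ_i` with
`x_i ∈ S`, `x_i → x`, `τ_i → 0⁺`. -/
def tcone {n : ℕ} (S : Set (E n)) (x : E n) : Set (E n) :=
  {s | ∃ (xs : ℕ → E n) (τ : ℕ → ℝ), (∀ i, xs i ∈ S) ∧ (∀ i, 0 < τ i) ∧
    Tendsto xs atTop (𝓝 x) ∧ Tendsto τ atTop (𝓝 0) ∧
    Tendsto (fun i => (τ i)⁻¹ • (xs i - x)) atTop (𝓝 s)}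


section Statement18Aux

lemma oneDivSucc : Tendsto (fun i : ℕ => 1 / ((i : ℝ) + 1)) atTop (𝓝 0) :=
  tendsto_one_div_add_atTop_nhds_zero_nat

lemma oneDivSucc_pos (i : ℕ) : 0 < 1 / ((i : ℝ) + 1) := by positivity

/-- values of an OSC map are closed -/

lemma oneDivSucc_le_one (i : ℕ) : 1 / ((i : ℝ) + 1) ≤ 1 := by
  rw [div_le_one (by positivity)]
  linarith [Nat.cast_nonneg (α := ℝ) i]
lemma closedVal {n : ℕ} {C : Set (E n)} {F : E n → Set (E n)} (hosc : OSCRel F C)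
    {x : E n} (hx : x ∈ C) : IsClosed (F x) := by
  refine IsSeqClosed.isClosed ?_
  intro u a hu hua
  exact hosc x a (fun _ => x) u hx (fun _ => hx) tendsto_const_nhds hu hua

/-- uniform outer-semicontinuity estimate near a point -/

lemma oscUnif {n : ℕ} {C : Set (E n)} {F : E n → Set (E n)} (hosc : OSCRel F C) (hlb : LocBddRel F C)
    {x0 : E n} (hx0 : x0 ∈ C) {ε : ℝ} (hε : 0 < ε) :
    ∃ δ > 0, ∀ z ∈ C, dist z x0 ≤ δ → F z ⊆ cthickening ε (F x0) := by
  by_contra hcon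
  push_neg at hcon
  obtain ⟨U, hUo, hUx, hUb⟩ := hlb x0 hx0
  obtain ⟨r, hr, hball⟩ := Metric.isOpen_iff.1 hUo x0 hUx
  have key : ∀ i : ℕ, ∃ z ∈ C, dist z x0 ≤ min (r/2) (1 / ((i:ℝ)+1)) ∧
      ∃ w ∈ F z, w ∉ cthickening ε (F x0) := by
    intro i
    obtain ⟨z, hz, hdz, hsub⟩ := hcon (min (r/2) (1 / ((i:ℝ)+1)))
      (lt_min (by linarith) (oneDivSucc_pos i))
    obtain ⟨w, hw, hw'⟩ := not_subset.1 hsub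
    exact ⟨z, hz, hdz, w, hw, hw'⟩
  choose zs hzsC hzsd ws hws hws' using key
  have hzsU : ∀ i, zs i ∈ U := by
    intro i
    apply hball
    have := hzsd i
    simp only [mem_ball]
    calc dist (zs i) x0 ≤ min (r/2) (1 / ((i:ℝ)+1)) := this
      _ ≤ r/2 := min_le_left _ _
      _ < r := by linarith
  have hwsB : ∀ i, ws i ∈ ⋃ x ∈ U ∩ C, F x := fun i =>
    mem_iUnion₂.2 ⟨zs i, ⟨hzsU i, hzsC i⟩, hws i⟩
  obtain ⟨w, -, φ, hφ, hwlim⟩ := tendsto_subseq_of_bounded hUb hwsB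
  have hzslim : Tendsto zs atTop (𝓝 x0) := by
    rw [tendsto_iff_dist_tendsto_zero]
    refine squeeze_zero (fun i => dist_nonneg) (fun i => (hzsd i).trans (min_le_right _ _))
      oneDivSucc
  have hwF : w ∈ F x0 :=
    hosc x0 w (zs ∘ φ) (ws ∘ φ) hx0 (fun i => hzsC _) (hzslim.comp hφ.tendsto_atTop)
      (fun i => hws _) hwlim
  have : ∀ᶠ i in atTop, dist (ws (φ i)) w < ε := hwlim (Metric.ball_mem_nhds w hε)
  obtain ⟨i, hi⟩ := this.exists
  exact hws' (φ i) (mem_cthickening_of_dist_le _ w ε _ hwF hi.le)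

/-- average of a function with a.e. values in a closed convex set -/

lemma avgMem {n : ℕ} {s : Set (E n)} (hconv : Convex ℝ s) (hcl : IsClosed s)
    {v : ℝ → E n} {a b : ℝ} (hlt : a < b)
    (hint : IntervalIntegrable v volume a b)
    (hae : ∀ᵐ t ∂(volume.restrict (Set.Ioc a b)), v t ∈ s) :
    (b - a)⁻¹ • ∫ t in a..b, v t ∈ s := by
  have h0 : volume (Set.Ioc a b) ≠ 0 := by
    simp only [Real.volume_Ioc, ne_eq, ENNReal.ofReal_eq_zero, not_le]
    linarith
  have hne : volume (Set.Ioc a b) ≠ ⊤ := by simp [Real.volume_Ioc]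
  have h := hconv.set_average_mem hcl h0 hne hae hint.1
  rw [MeasureTheory.setAverage_eq, measureReal_def, Real.volume_Ioc,
    ENNReal.toReal_ofReal (by linarith)] at h
  rwa [intervalIntegral.integral_of_le hlt.le]

/-- a.e. properties on a nondegenerate interval hold on a dense set -/

lemma aeDense {T : ℝ} (hT : 0 < T) {P : ℝ → Prop}
    (hae : ∀ᵐ t ∂(volume.restrict (Icc (0:ℝ) T)), P t) {t : ℝ} (ht : t ∈ Icc (0:ℝ) T) :
    ∃ u : ℕ → ℝ, (∀ i, u i ∈ Icc (0:ℝ) T ∧ P (u i)) ∧ Tendsto u atTop (𝓝 t) := by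
  have key : ∀ i : ℕ, ∃ s, s ∈ Icc (0:ℝ) T ∧ P s ∧ dist s t ≤ 1 / ((i:ℝ)+1) := by
    intro i
    set η := 1 / ((i:ℝ)+1) with hη
    have hηp : 0 < η := oneDivSucc_pos i
    by_contra hno
    push_neg at hno
    set J := Ioo (max (t - η) 0) (min (t + η) T) with hJ
    have hJP : ∀ s ∈ J, s ∈ Icc (0:ℝ) T ∧ ¬ P s := by
      intro s hs
      obtain ⟨hs1, hs2⟩ := hs
      have hsI : s ∈ Icc (0:ℝ) T :=
        ⟨le_of_lt (lt_of_le_of_lt (le_max_right _ _) hs1),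
         le_of_lt (lt_of_lt_of_le hs2 (min_le_right _ _))⟩
      refine ⟨hsI, fun hP => ?_⟩
      have hd : dist s t ≤ η := by
        rw [Real.dist_eq, abs_le]
        constructor
        · have := lt_of_le_of_lt (le_max_left _ _) hs1; linarith
        · have := lt_of_lt_of_le hs2 (min_le_left _ _); linarith
      exact absurd hd (not_le.2 (hno s hsI hP))
    -- measure contradiction
    have hnull : volume.restrict (Icc (0:ℝ) T) {s | ¬ P s} = 0 := ae_iff.1 hae
    have hJnull : volume.restrict (Icc (0:ℝ) T) J = 0 := by
      refine measure_mono_null (fun s hs => (hJP s hs).2) hnull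
    rw [Measure.restrict_apply' measurableSet_Icc] at hJnull
    have hJIcc : J ∩ Icc (0:ℝ) T = J := by
      apply inter_eq_left.2
      intro s hs; exact (hJP s hs).1
    rw [hJIcc] at hJnull
    have hlt : max (t - η) 0 < min (t + η) T := by
      obtain ⟨ht0, htT⟩ := ht
      rcases max_cases (t - η) 0 with ⟨h1, _⟩ | ⟨h1, _⟩ <;>
        rcases min_cases (t + η) T with ⟨h2, _⟩ | ⟨h2, _⟩ <;> rw [h1, h2] <;> linarith
    rw [Real.volume_Ioo] at hJnull
    simp only [ENNReal.ofReal_eq_zero] at hJnull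
    linarith [hJnull]
  choose u hu1 hu2 hu3 using key
  refine ⟨u, fun i => ⟨hu1 i, hu2 i⟩, ?_⟩
  rw [tendsto_iff_dist_tendsto_zero]
  exact squeeze_zero (fun i => dist_nonneg) hu3 oneDivSucc


lemma partA {n : ℕ} {C : Set (E n)} (hC : IsClosed C) {F : E n → Set (E n)}
    (hosc : OSCRel F C) (hlb : LocBddRel F C)
    (hne : ∀ x ∈ C, (F x).Nonempty) (hcvx : ∀ x ∈ C, Convex ℝ (F x))
    {T : ℝ} (hT : 0 < T) {x : ℝ → E n} (hsol : IsDISol F C T x) :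
    (F (x 0) ∩ tcone C (x 0)).Nonempty := by
  obtain ⟨hx0, v, hvi, hae, hint⟩ := hsol
  -- continuity of x on [0, T]
  have hIcc : uIcc (0:ℝ) T = Icc 0 T := uIcc_of_le hT.le
  have hvIcc : IntegrableOn v (Icc (0:ℝ) T) volume :=
    (integrableOn_Icc_iff_integrableOn_Ioc).2 hvi.1
  have hprim : ContinuousOn (fun t => x 0 + ∫ s in (0:ℝ)..t, v s) (Icc 0 T) := by
    apply ContinuousOn.add continuousOn_const
    have := intervalIntegral.continuousOn_primitive_interval (a := (0:ℝ)) (b := T)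
      (f := v) (μ := volume) (by rwa [hIcc])
    rwa [hIcc] at this
  have hxc : ContinuousOn x (Icc (0:ℝ) T) := hprim.congr hint
  have h0T : (0:ℝ) ∈ Icc (0:ℝ) T := ⟨le_refl _, hT.le⟩
  -- x stays in C
  have hxC : ∀ t ∈ Icc (0:ℝ) T, x t ∈ C := by
    intro t ht
    obtain ⟨u, hu, hulim⟩ := aeDense hT hae ht
    have hseq : Tendsto (fun i => x (u i)) atTop (𝓝 (x t)) :=
      (hxc t ht).tendsto.comp
        (tendsto_nhdsWithin_iff.2 ⟨hulim, Eventually.of_forall fun i => (hu i).1⟩)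
    exact hC.mem_of_tendsto hseq (Eventually.of_forall fun i => (hu i).2.1)
  -- bounded container
  obtain ⟨U, hUo, hUx, hUb⟩ := hlb (x 0) hx0
  have hFB : F (x 0) ⊆ ⋃ z ∈ U ∩ C, F z := fun w hw => mem_iUnion₂.2 ⟨x 0, ⟨hUx, hx0⟩, hw⟩
  have hFbdd : Bornology.IsBounded (F (x 0)) := hUb.subset hFB
  have hBbdd : Bornology.IsBounded (cthickening 1 (F (x 0))) := hFbdd.cthickening
  -- for each i choose τ i
  have key : ∀ i : ℕ, ∃ τ : ℝ, 0 < τ ∧ τ ≤ T ∧ τ ≤ 1 / ((i:ℝ)+1) ∧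
      (τ⁻¹ • (x τ - x 0) ∈ cthickening (1 / ((i:ℝ)+1)) (F (x 0))) ∧
      dist (x τ) (x 0) ≤ 1 / ((i:ℝ)+1) := by
    intro i
    set ε := 1 / ((i:ℝ)+1) with hεdef
    have hε : 0 < ε := oneDivSucc_pos i
    obtain ⟨δ, hδ, hδP⟩ := oscUnif hosc hlb hx0 hε
    have hV : x ⁻¹' (ball (x 0) (min δ ε)) ∈ 𝓝[Icc (0:ℝ) T] 0 :=
      (hxc 0 h0T).tendsto (Metric.ball_mem_nhds _ (lt_min hδ hε))
    rw [Metric.mem_nhdsWithin_iff] at hV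
    obtain ⟨η, hη, hηsub⟩ := hV
    set τ := min (η/2) (min T ε) with hτdef
    have hτpos : 0 < τ := lt_min (by linarith) (lt_min hT hε)
    have hτT : τ ≤ T := le_trans (min_le_right _ _) (min_le_left _ _)
    have hτε : τ ≤ ε := le_trans (min_le_right _ _) (min_le_right _ _)
    have hmem : ∀ t : ℝ, 0 < t → t ≤ τ → dist (x t) (x 0) < min δ ε := by
      intro t ht0 htτ
      have h1 : t ∈ ball (0:ℝ) η := by
        rw [mem_ball, Real.dist_eq, sub_zero, abs_of_pos ht0]
        calc t ≤ τ := htτ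
          _ ≤ η/2 := min_le_left _ _
          _ < η := by linarith
      exact hηsub ⟨h1, ⟨ht0.le, htτ.trans hτT⟩⟩
    have havg : τ⁻¹ • (x τ - x 0) ∈ cthickening ε (F (x 0)) := by
      have hxτ : x τ = x 0 + ∫ s in (0:ℝ)..τ, v s := hint τ ⟨hτpos.le, hτT⟩
      have heq : x τ - x 0 = ∫ s in (0:ℝ)..τ, v s := by rw [hxτ]; abel
      have hae' : ∀ᵐ t ∂(volume.restrict (Set.Ioc 0 τ)), v t ∈ cthickening ε (F (x 0)) := by
        have hsub : Set.Ioc (0:ℝ) τ ⊆ Icc 0 T := fun t ht => ⟨ht.1.le, ht.2.trans hτT⟩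
        filter_upwards [ae_restrict_of_ae_restrict_of_subset hsub hae,
          ae_restrict_mem measurableSet_Ioc] with t htP htm
        exact hδP (x t) htP.1
          (le_of_lt (lt_of_lt_of_le (hmem t htm.1 htm.2) (min_le_left _ _))) htP.2
      have hsub2 : uIcc (0:ℝ) τ ⊆ uIcc 0 T := by
        rw [hIcc, uIcc_of_le hτpos.le]; exact Icc_subset_Icc le_rfl hτT
      have := avgMem ((hcvx (x 0) hx0).cthickening ε) (isClosed_cthickening)
        hτpos (hvi.mono_set hsub2) hae'
      rw [heq]
      simpa using this
    refine ⟨τ, hτpos, hτT, hτε, havg, ?_⟩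
    exact le_of_lt (lt_of_lt_of_le (hmem τ hτpos le_rfl) (min_le_right _ _))
  choose τ hτpos hτT hτε havg hxd using key
  -- the averages are bounded
  have havgB : ∀ i, (τ i)⁻¹ • (x (τ i) - x 0) ∈ cthickening 1 (F (x 0)) := by
    intro i
    refine cthickening_mono ?_ (F (x 0)) (havg i)
    rw [div_le_one (by positivity)]
    have : (0:ℝ) ≤ (i:ℝ) := Nat.cast_nonneg i
    linarith
  obtain ⟨s, -, φ, hφ, hslim⟩ := tendsto_subseq_of_bounded hBbdd havgB
  refine ⟨s, ?_, ?_⟩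
  · -- s ∈ F (x 0)
    have hmemall : ∀ ε : ℝ, 0 < ε → s ∈ cthickening ε (F (x 0)) := by
      intro ε hε
      apply (isClosed_cthickening).mem_of_tendsto hslim
      have hev : ∀ᶠ i : ℕ in atTop, 1 / ((i:ℝ)+1) ≤ ε :=
        oneDivSucc.eventually (eventually_le_nhds hε)
      filter_upwards [hev] with i hi
      exact cthickening_mono (le_trans (one_div_le_one_div_of_le (by positivity)
        (by exact_mod_cast Nat.succ_le_succ hφ.le_apply)) hi) (F (x 0)) (havg (φ i))
    have hcl : closure (F (x 0)) = F (x 0) := (closedVal hosc hx0).closure_eq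
    rw [← hcl, closure_eq_iInter_cthickening]
    exact mem_iInter₂.2 fun ε hε => hmemall ε hε
  · -- s ∈ tcone
    refine ⟨fun i => x (τ (φ i)), fun i => τ (φ i), ?_, fun i => hτpos _, ?_, ?_, hslim⟩
    · exact fun i => hxC _ ⟨(hτpos _).le, hτT _⟩
    · rw [tendsto_iff_dist_tendsto_zero]
      refine squeeze_zero (fun i => dist_nonneg) (fun i => ?_) oneDivSucc
      exact (hxd (φ i)).trans (one_div_le_one_div_of_le (by positivity)
        (by exact_mod_cast Nat.succ_le_succ hφ.le_apply))
    · rw [tendsto_iff_dist_tendsto_zero]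
      refine squeeze_zero (fun i => dist_nonneg) (fun i => ?_) oneDivSucc
      rw [Real.dist_eq, sub_zero, abs_of_pos (hτpos _)]
      exact (hτε (φ i)).trans (one_div_le_one_div_of_le (by positivity)
        (by exact_mod_cast Nat.succ_le_succ hφ.le_apply))

lemma slopeRight {n : ℕ} {f : ℝ → E n} {t : ℝ} {f' : E n} (hd : HasDerivAt f f' t)
    {h : ℕ → ℝ} (hpos : ∀ m, 0 < h m) (hlim : Tendsto h atTop (𝓝 0)) :
    Tendsto (fun m => (h m)⁻¹ • (f (t + h m) - f t)) atTop (𝓝 f') := by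
  have hs := hasDerivAt_iff_tendsto_slope.1 hd
  have hseq : Tendsto (fun m => t + h m) atTop (𝓝[≠] t) := by
    rw [tendsto_nhdsWithin_iff]
    constructor
    · simpa using tendsto_const_nhds.add hlim
    · exact Eventually.of_forall fun m => by
        simp only [mem_compl_iff, mem_singleton_iff]
        intro hc; nlinarith [hpos m, hc]
  have := hs.comp hseq
  convert this using 2 with m
  rw [Function.comp_apply, slope_def_module, add_sub_cancel_left]

lemma derivBd {n : ℕ} {L : NNReal} {f : ℝ → E n} (hf : LipschitzWith L f) (t : ℝ) :
    ‖deriv f t‖ ≤ L := by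
  by_cases h : DifferentiableAt ℝ f t
  · have hs := hasDerivAt_iff_tendsto_slope.1 h.hasDerivAt
    refine le_of_tendsto hs.norm ?_
    filter_upwards [self_mem_nhdsWithin] with y hy
    rw [slope_def_module, norm_smul, Real.norm_eq_abs, abs_inv]
    have hd := hf.dist_le_mul y t
    rw [dist_eq_norm] at hd
    have hyt : |y - t| ≠ 0 := by
      simp only [ne_eq, abs_eq_zero, sub_eq_zero]
      exact hy
    calc |y - t|⁻¹ * ‖f y - f t‖ ≤ |y - t|⁻¹ * ((L:ℝ) * |y - t|) := by
          apply mul_le_mul_of_nonneg_left _ (by positivity)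
          rwa [Real.dist_eq] at hd
      _ = L := by field_simp
  · rw [deriv_zero_of_not_differentiableAt h]
    simp

lemma lipFTC {n : ℕ} {L : NNReal} {f : ℝ → E n} (hf : LipschitzWith L f) (a b : ℝ) (hab : a ≤ b) :
    ∫ t in a..b, deriv f t = f b - f a := by
  rcases eq_or_lt_of_le hab with rfl | hab'
  · simp
  have hfc : Continuous f := hf.continuous
  have hfi : ∀ c d : ℝ, IntervalIntegrable f volume c d := fun c d => hfc.intervalIntegrable c d
  set g : ℕ → ℝ → E n := fun m t => ((m:ℝ)+1) • (f (t + 1/((m:ℝ)+1)) - f t) with hg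
  have hgcont : ∀ m, Continuous (g m) := fun m =>
    (((hfc.comp (continuous_id.add continuous_const : Continuous fun t : ℝ => t + 1/((m:ℝ)+1))).sub hfc).const_smul ((m:ℝ)+1) :)
  have hgbd : ∀ m t, ‖g m t‖ ≤ L := by
    intro m t
    have h1 : ‖f (t + 1/((m:ℝ)+1)) - f t‖ ≤ (L:ℝ) * (1/((m:ℝ)+1)) := by
      have h2 := hf.dist_le_mul (t + 1/((m:ℝ)+1)) t
      rw [dist_eq_norm, Real.dist_eq, add_sub_cancel_left,
        abs_of_pos (oneDivSucc_pos m)] at h2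
      exact h2
    calc ‖g m t‖ = ((m:ℝ)+1) * ‖f (t + 1/((m:ℝ)+1)) - f t‖ := by
          rw [hg]; simp only []
          rw [norm_smul, Real.norm_eq_abs, abs_of_pos (by positivity)]
      _ ≤ ((m:ℝ)+1) * ((L:ℝ) * (1/((m:ℝ)+1))) := by
          exact mul_le_mul_of_nonneg_left h1 (by positivity)
      _ = L := by field_simp
  -- pointwise a.e. convergence to deriv
  have hlim : ∀ᵐ t ∂volume, Tendsto (fun m => g m t) atTop (𝓝 (deriv f t)) := by
    filter_upwards [hf.ae_differentiableAt] with t ht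
    have := slopeRight ht.hasDerivAt (h := fun m : ℕ => 1/((m:ℝ)+1)) (fun m => oneDivSucc_pos m)
      oneDivSucc
    refine this.congr fun m => ?_
    simp only [hg, one_div, inv_inv]
  -- dominated convergence on Ioc a b
  have hdct : Tendsto (fun m => ∫ t in Set.Ioc a b, g m t) atTop
      (𝓝 (∫ t in Set.Ioc a b, deriv f t)) := by
    refine MeasureTheory.tendsto_integral_of_dominated_convergence (fun _ => (L:ℝ))
      (fun m => (hgcont m).aestronglyMeasurable.restrict) ?_ ?_ ?_
    · exact integrable_const _
    · exact fun m => ae_of_all _ (hgbd m)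
    · exact ae_restrict_of_ae hlim
  -- compute the integrals of g m
  have hval : ∀ m : ℕ, ∫ t in Set.Ioc a b, g m t =
      ((m:ℝ)+1) • ((∫ t in b..(b + 1/((m:ℝ)+1)), f t) - ∫ t in a..(a + 1/((m:ℝ)+1)), f t) := by
    intro m
    set h := 1/((m:ℝ)+1) with hh
    rw [← intervalIntegral.integral_of_le hab'.le]
    rw [hg]
    simp only []
    rw [intervalIntegral.integral_smul]
    congr 1
    have hsc : Continuous (fun t : ℝ => f (t + h)) := hfc.comp (continuous_id.add continuous_const)
    rw [intervalIntegral.integral_sub (hsc.intervalIntegrable a b) (hfi a b)]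
    have hcomp : ∫ t in a..b, f (t + h) = ∫ t in (a+h)..(b+h), f t :=
      intervalIntegral.integral_comp_add_right f h
    rw [hcomp]
    have e1 : ∫ t in a..(b+h), f t = (∫ t in a..(a+h), f t) + ∫ t in (a+h)..(b+h), f t :=
      (intervalIntegral.integral_add_adjacent_intervals (hfi a (a+h)) (hfi (a+h) (b+h))).symm
    have e2 : ∫ t in a..(b+h), f t = (∫ t in a..b, f t) + ∫ t in b..(b+h), f t :=
      (intervalIntegral.integral_add_adjacent_intervals (hfi a b) (hfi b (b+h))).symm
    have e3 := e1.symm.trans e2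
    -- ∫a..(a+h) + ∫(a+h)..(b+h) = ∫a..b + ∫b..(b+h)
    have : (∫ t in (a+h)..(b+h), f t) - (∫ t in a..b, f t)
        = (∫ t in b..(b+h), f t) - ∫ t in a..(a+h), f t := by
      rw [sub_eq_sub_iff_add_eq_add, add_comm ((∫ t in (a+h)..(b+h), f t)) _, e3, add_comm]
    rw [this]
  -- limit of averages near a point
  have hpt : ∀ c : ℝ, Tendsto (fun m : ℕ => ((m:ℝ)+1) • ∫ t in c..(c + 1/((m:ℝ)+1)), f t)
      atTop (𝓝 (f c)) := by
    intro c
    rw [tendsto_iff_dist_tendsto_zero]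
    have hb : ∀ m : ℕ, dist (((m:ℝ)+1) • ∫ t in c..(c + 1/((m:ℝ)+1)), f t) (f c)
        ≤ (L:ℝ) * (1/((m:ℝ)+1)) := by
      intro m
      set h := 1/((m:ℝ)+1) with hh
      have hhpos : 0 < h := oneDivSucc_pos m
      have hsplit : (∫ t in c..(c+h), f t) - h • f c = ∫ t in c..(c+h), (f t - f c) := by
        rw [intervalIntegral.integral_sub (hfi c (c+h)) intervalIntegrable_const,
          intervalIntegral.integral_const]
        simp
      have hnorm : ‖∫ t in c..(c+h), (f t - f c)‖ ≤ ((L:ℝ) * h) * |c + h - c| := by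
        apply intervalIntegral.norm_integral_le_of_norm_le_const
        intro t ht
        rw [Set.uIoc_of_le (by linarith)] at ht
        have := hf.dist_le_mul t c
        rw [dist_eq_norm, Real.dist_eq] at this
        refine this.trans ?_
        have h1 : |t - c| ≤ h := by
          rw [abs_of_pos (by linarith [ht.1])]
          linarith [ht.2]
        exact mul_le_mul_of_nonneg_left h1 (by positivity)
      rw [dist_eq_norm]
      have heq : ((m:ℝ)+1) • (∫ t in c..(c+h), f t) - f c
          = ((m:ℝ)+1) • ((∫ t in c..(c+h), f t) - h • f c) := by
        rw [smul_sub, smul_smul]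
        have : ((m:ℝ)+1) * h = 1 := by rw [hh]; field_simp
        rw [this, one_smul]
      rw [heq, hsplit, norm_smul, Real.norm_eq_abs, abs_of_pos (by positivity)]
      have : |c + h - c| = h := by rw [add_sub_cancel_left, abs_of_pos hhpos]
      rw [this] at hnorm
      calc ((m:ℝ)+1) * ‖∫ t in c..(c+h), (f t - f c)‖ ≤ ((m:ℝ)+1) * (((L:ℝ) * h) * h) :=
            mul_le_mul_of_nonneg_left hnorm (by positivity)
        _ = (L:ℝ) * (((m:ℝ)+1) * h) * h := by ring
        _ = (L:ℝ) * h := by rw [hh]; field_simp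
    refine squeeze_zero (fun m => dist_nonneg) hb ?_
    simpa using oneDivSucc.const_mul (L:ℝ)
  -- combine
  have hcomb : Tendsto (fun m : ℕ => ∫ t in Set.Ioc a b, g m t) atTop (𝓝 (f b - f a)) := by
    have := (hpt b).sub (hpt a)
    refine this.congr fun m => ?_
    rw [hval m, smul_sub]
  have := tendsto_nhds_unique hdct hcomb
  rw [intervalIntegral.integral_of_le hab'.le, this]

lemma diagLim {n : ℕ} {x0 : E n} {L : NNReal} (g : ℕ → ℝ → E n) (hlip : ∀ k, LipschitzWith L (g k))
    (h0 : ∀ k, g k 0 = x0) :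
    ∃ (φ : ℕ → ℕ) (x : ℝ → E n), StrictMono φ ∧ LipschitzWith L x ∧
      ∀ t, Tendsto (fun k => g (φ k) t) atTop (𝓝 (x t)) := by
  set S : ℚ → Set (E n) := fun q => closedBall x0 ((L:ℝ) * |(q:ℝ)|) with hS
  have hcomp : IsCompact (univ.pi S) := isCompact_univ_pi fun q => isCompact_closedBall _ _
  have hmem : ∀ k, (fun q : ℚ => g k (q:ℝ)) ∈ univ.pi S := by
    intro k q _
    rw [hS]
    simp only [mem_closedBall]
    calc dist (g k (q:ℝ)) x0 = dist (g k (q:ℝ)) (g k 0) := by rw [h0]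
      _ ≤ (L:ℝ) * dist (q:ℝ) 0 := (hlip k).dist_le_mul _ _
      _ = (L:ℝ) * |(q:ℝ)| := by rw [Real.dist_eq, sub_zero]
  obtain ⟨a, -, φ, hφ, halim⟩ := hcomp.isSeqCompact hmem
  have hptlim : ∀ q : ℚ, Tendsto (fun k => g (φ k) (q:ℝ)) atTop (𝓝 (a q)) := by
    intro q
    exact (tendsto_pi_nhds.1 halim) q
  have hcauchy : ∀ t : ℝ, CauchySeq (fun k => g (φ k) t) := by
    intro t
    rw [Metric.cauchySeq_iff]
    intro ε hε
    obtain ⟨q, hq⟩ := exists_rat_near t (show (0:ℝ) < ε/(3*((L:ℝ)+1)) by positivity)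
    have hq' : (L:ℝ) * |t - (q:ℝ)| ≤ ε/3 := by
      have h1 : (L:ℝ) * |t - (q:ℝ)| ≤ ((L:ℝ)+1) * (ε/(3*((L:ℝ)+1))) := by
        apply mul_le_mul (by linarith) hq.le (abs_nonneg _) (by positivity)
      calc (L:ℝ) * |t - (q:ℝ)| ≤ ((L:ℝ)+1) * (ε/(3*((L:ℝ)+1))) := h1
        _ = ε/3 := by field_simp
    obtain ⟨N, hN⟩ := Metric.cauchySeq_iff.1 (hptlim q).cauchySeq (ε/3) (by positivity)
    refine ⟨N, fun i hi j hj => ?_⟩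
    have hd1 : dist (g (φ i) t) (g (φ i) (q:ℝ)) ≤ ε/3 := by
      refine le_trans ((hlip _).dist_le_mul t (q:ℝ)) ?_
      rwa [Real.dist_eq]
    have hd2 : dist (g (φ j) (q:ℝ)) (g (φ j) t) ≤ ε/3 := by
      refine le_trans ((hlip _).dist_le_mul _ _) ?_
      rwa [Real.dist_eq, abs_sub_comm]
    calc dist (g (φ i) t) (g (φ j) t)
        ≤ dist (g (φ i) t) (g (φ i) (q:ℝ)) + dist (g (φ i) (q:ℝ)) (g (φ j) (q:ℝ))
          + dist (g (φ j) (q:ℝ)) (g (φ j) t) := dist_triangle4 _ _ _ _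
      _ < ε/3 + ε/3 + ε/3 := by
          have := hN i hi j hj
          exact add_lt_add_of_lt_of_le (add_lt_add_of_le_of_lt hd1 this) hd2
      _ = ε := by ring
  have hex : ∀ t : ℝ, ∃ y : E n, Tendsto (fun k => g (φ k) t) atTop (𝓝 y) :=
    fun t => cauchySeq_tendsto_of_complete (hcauchy t)
  choose x hx using hex
  refine ⟨φ, x, hφ, ?_, hx⟩
  apply LipschitzWith.of_dist_le_mul
  intro s t
  have hdl : Tendsto (fun k => dist (g (φ k) s) (g (φ k) t)) atTop (𝓝 (dist (x s) (x t))) :=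
    (hx s).dist (hx t)
  exact le_of_tendsto hdl (Eventually.of_forall fun k => (hlip _).dist_le_mul s t)

lemma unifTang {n : ℕ} {C : Set (E n)} {F : E n → Set (E n)} {K : Set (E n)} (hK : IsCompact K)
    (hKne : K.Nonempty) {M : ℝ}
    (hM : ∀ y ∈ K, ∀ s ∈ F y, ‖s‖ ≤ M)
    (hviab : ∀ y ∈ K, (F y ∩ tcone C y).Nonempty)
    {ε : ℝ} (hε : 0 < ε) (hε1 : ε ≤ 1) :
    ∃ α : ℝ, 0 < α ∧ α ≤ ε ∧ ∀ y ∈ K, ∃ (τ : ℝ) (z s y' : E n),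
      α ≤ τ ∧ τ ≤ ε ∧ z ∈ K ∧ dist z y ≤ ε ∧ s ∈ F z ∧ ‖s‖ ≤ M ∧ y' ∈ C ∧
      ‖y' - (y + τ • s)‖ ≤ ε * τ := by
  classical
  have step1 : ∀ z ∈ K, ∃ τ : ℝ, 0 < τ ∧ τ ≤ ε ∧ ∃ s, s ∈ F z ∧ ∃ y', y' ∈ C ∧
      ‖y' - (z + τ • s)‖ ≤ ε/2 * τ := by
    intro z hz
    obtain ⟨s, hsF, xs, τs, hxsC, hτpos, hxslim, hτlim, hqlim⟩ := hviab z hz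
    have h1 : ∀ᶠ i in atTop, τs i ≤ ε := hτlim.eventually (eventually_le_nhds hε)
    have h2 : ∀ᶠ i in atTop, dist ((τs i)⁻¹ • (xs i - z)) s ≤ ε/2 := by
      have := hqlim.eventually (Metric.closedBall_mem_nhds s (show (0:ℝ) < ε/2 by linarith))
      exact this.mono fun i hi => mem_closedBall.1 hi
    obtain ⟨i, hi1, hi2⟩ := (h1.and h2).exists
    refine ⟨τs i, hτpos i, hi1, s, hsF, xs i, hxsC i, ?_⟩
    have hτne : τs i ≠ 0 := (hτpos i).ne'
    have hrw : xs i - (z + τs i • s) = τs i • ((τs i)⁻¹ • (xs i - z) - s) := by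
      rw [smul_sub, smul_inv_smul₀ hτne]
      module
    rw [hrw, norm_smul, Real.norm_eq_abs, abs_of_pos (hτpos i)]
    rw [dist_eq_norm] at hi2
    calc τs i * ‖(τs i)⁻¹ • (xs i - z) - s‖ ≤ τs i * (ε/2) :=
          mul_le_mul_of_nonneg_left hi2 (hτpos i).le
      _ = ε/2 * τs i := mul_comm _ _
  choose! τf hτf1 hτf2 sf hsf yf hyfC hyfcl using step1
  have hcover : K ⊆ ⋃ z ∈ K, ball z (ε * τf z / 2) := by
    intro z hz
    exact mem_iUnion₂.2 ⟨z, hz, mem_ball_self (by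
      have := hτf1 z hz; positivity)⟩
  obtain ⟨b', hb'K, hb'fin, hb'cov⟩ :=
    hK.elim_finite_subcover_image (fun z _ => isOpen_ball) hcover
  have hb'ne : b'.Nonempty := by
    obtain ⟨y0, hy0⟩ := hKne
    obtain ⟨z, hz, -⟩ := mem_iUnion₂.1 (hb'cov hy0)
    exact ⟨z, hz⟩
  obtain ⟨zmin, hzmin, hzminle⟩ := Set.exists_min_image b' τf hb'fin hb'ne
  refine ⟨τf zmin, hτf1 zmin (hb'K hzmin), hτf2 zmin (hb'K hzmin), ?_⟩
  intro y hy
  obtain ⟨z, hzb, hyz⟩ := mem_iUnion₂.1 (hb'cov hy)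
  have hzK : z ∈ K := hb'K hzb
  have hτpos := hτf1 z hzK
  have hτε := hτf2 z hzK
  have hyzd : dist y z < ε * τf z / 2 := mem_ball.1 hyz
  refine ⟨τf z, z, sf z, yf z, hzminle z hzb, hτε, hzK, ?_, hsf z hzK,
    hM z hzK _ (hsf z hzK), hyfC z hzK, ?_⟩
  · rw [dist_comm]
    nlinarith [hyzd, hτpos, hε, hε1, hτε]
  · have htri : yf z - (y + τf z • sf z) = (yf z - (z + τf z • sf z)) + (z - y) := by module
    rw [htri]
    calc ‖(yf z - (z + τf z • sf z)) + (z - y)‖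
        ≤ ‖yf z - (z + τf z • sf z)‖ + ‖z - y‖ := norm_add_le _ _
      _ ≤ ε/2 * τf z + ε * τf z / 2 := by
          refine add_le_add (hyfcl z hzK) ?_
          rw [← dist_eq_norm, dist_comm]
          exact hyzd.le
      _ = ε * τf z := by ring

set_option maxHeartbeats 1000000 in
lemma euler {n : ℕ} {C : Set (E n)} {F : E n → Set (E n)} {x0 : E n} {δ M : ℝ}
    (hδ : 0 < δ) (hM : 0 ≤ M) (hC : IsClosed C) (hx0 : x0 ∈ C)
    (hbd : ∀ y ∈ closedBall x0 δ ∩ C, ∀ s ∈ F y, ‖s‖ ≤ M)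
    (hviab : ∀ y ∈ closedBall x0 δ ∩ C, (F y ∩ tcone C y).Nonempty)
    {ε : ℝ} (hε : 0 < ε) (hε1 : ε ≤ 1) :
    ∃ (N : ℕ) (tt : ℕ → ℝ) (y z s : ℕ → E n),
      tt 0 = 0 ∧ y 0 = x0 ∧ (∀ i, tt i < tt (i+1)) ∧
      tt N ≤ δ/(M+1) ∧ δ/(M+1) < tt (N+1) ∧
      ∀ i ≤ N, tt (i+1) - tt i ≤ ε ∧ y i ∈ C ∧ dist (y i) x0 ≤ δ ∧ y (i+1) ∈ C ∧
        z i ∈ C ∧ dist (z i) (y i) ≤ ε ∧ s i ∈ F (z i) ∧ ‖s i‖ ≤ M ∧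
        ‖y (i+1) - y i - (tt (i+1) - tt i) • s i‖ ≤ ε * (tt (i+1) - tt i) := by
  classical
  set T := δ/(M+1) with hT
  have hTpos : 0 < T := by positivity
  have hMT : (M+1) * T = δ := by rw [hT]; field_simp
  set K : Set (E n) := closedBall x0 δ ∩ C with hK
  have hKcomp : IsCompact K := (isCompact_closedBall x0 δ).inter_right hC
  have hx0K : x0 ∈ K := ⟨mem_closedBall_self hδ.le, hx0⟩
  obtain ⟨α, hα, hαε, hstep⟩ := unifTang hKcomp ⟨x0, hx0K⟩ hbd hviab hε hε1
  choose! τg zg sg yg hg1 hg2 hgzK hgzd hgsF hgsM hgyC hgycl using hstep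
  set dt : E n → ℝ := fun y => if y ∈ K then τg y else 1 with hdt
  set nxt : E n → E n := fun y => if y ∈ K then yg y else y with hnxt
  set stp : ℝ × E n → ℝ × E n := fun q => (q.1 + dt q.2, nxt q.2) with hstpdef
  set p : ℕ → ℝ × E n := fun i => stp^[i] ((0:ℝ), x0) with hp
  have hp0 : p 0 = ((0:ℝ), x0) := rfl
  have hpsucc : ∀ i, p (i+1) = stp (p i) := fun i => Function.iterate_succ_apply' stp i _
  set tt : ℕ → ℝ := fun i => (p i).1 with htt
  set y : ℕ → E n := fun i => (p i).2 with hy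
  have htt0 : tt 0 = 0 := by rw [htt]; simp only [hp0]
  have hy0 : y 0 = x0 := by rw [hy]; simp only [hp0]
  have hps : ∀ i, tt (i+1) = tt i + dt (y i) ∧ y (i+1) = nxt (y i) := by
    intro i
    constructor
    · show (p (i+1)).1 = (p i).1 + dt (p i).2
      rw [hpsucc i]
    · show (p (i+1)).2 = nxt (p i).2
      rw [hpsucc i]
  have hdtpos : ∀ w : E n, 0 < dt w := by
    intro w
    rw [hdt]
    by_cases hw : w ∈ K
    · simpa [hw] using lt_of_lt_of_le hα (hg1 w hw)
    · simp [hw]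
  have hdtlb : ∀ w : E n, min α 1 ≤ dt w := by
    intro w
    rw [hdt]
    by_cases hw : w ∈ K
    · simpa [hw] using le_trans (min_le_left _ _) (hg1 w hw)
    · simp [hw]
  have hlt : ∀ i, tt i < tt (i+1) := fun i => by
    rw [(hps i).1]; linarith [hdtpos (y i)]
  have hmono : Monotone tt := monotone_nat_of_le_succ fun i => (hlt i).le
  have hgrow : ∀ i : ℕ, (i : ℝ) * min α 1 ≤ tt i := by
    intro i
    induction i with
    | zero => simp [htt0]
    | succ i ih =>
      rw [(hps i).1]
      push_cast
      have := hdtlb (y i)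
      nlinarith
  have hex : ∃ m : ℕ, T < tt m := by
    have hm1 : 0 < min α 1 := lt_min hα one_pos
    obtain ⟨m, hm⟩ := exists_nat_gt (T / min α 1)
    refine ⟨m, lt_of_lt_of_le ?_ (hgrow m)⟩
    rwa [div_lt_iff₀ hm1] at hm
  set k := Nat.find hex with hk
  have hk0 : k ≠ 0 := by
    intro h
    have hsp := Nat.find_spec hex
    rw [← hk, h, htt0] at hsp
    linarith
  set N := k - 1 with hN
  have hNk : N + 1 = k := Nat.succ_pred_eq_of_pos (Nat.pos_of_ne_zero hk0)
  have httN : tt N ≤ T := by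
    have h := Nat.find_min hex (m := N) (by omega)
    exact not_lt.1 h
  have httN1 : T < tt (N+1) := by
    rw [hNk]
    exact Nat.find_spec hex
  -- invariant
  have hinv : ∀ i, tt i ≤ T → y i ∈ C ∧ dist (y i) x0 ≤ (M+1) * tt i := by
    intro i
    induction i with
    | zero =>
      intro _
      rw [hy0, htt0]
      simp [hx0]
    | succ i ih =>
      intro hi1
      have hti : tt i ≤ T := le_trans (hlt i).le hi1
      obtain ⟨hyC, hyd⟩ := ih hti
      have htt0 : 0 ≤ tt i := by
        have := hgrow i
        have : (0:ℝ) ≤ (i:ℝ) * min α 1 := by positivity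
        linarith [hgrow i]
      have hyK : y i ∈ K := by
        refine ⟨?_, hyC⟩
        rw [mem_closedBall]
        calc dist (y i) x0 ≤ (M+1) * tt i := hyd
          _ ≤ (M+1) * T := by nlinarith
          _ = δ := hMT
      have hdteq : dt (y i) = τg (y i) := by rw [hdt]; simp [hyK]
      have hnxteq : y (i+1) = yg (y i) := by rw [(hps i).2, hnxt]; simp [hyK]
      constructor
      · rw [hnxteq]; exact hgyC (y i) hyK
      · have hstep : dist (y (i+1)) (y i) ≤ (M+1) * τg (y i) := by
          rw [hnxteq, dist_eq_norm]
          have : yg (y i) - y i = (yg (y i) - (y i + τg (y i) • sg (y i)))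
              + τg (y i) • sg (y i) := by module
          rw [this]
          have hτpos : 0 < τg (y i) := lt_of_lt_of_le hα (hg1 _ hyK)
          calc ‖(yg (y i) - (y i + τg (y i) • sg (y i))) + τg (y i) • sg (y i)‖
              ≤ ‖yg (y i) - (y i + τg (y i) • sg (y i))‖ + ‖τg (y i) • sg (y i)‖ :=
                norm_add_le _ _
            _ ≤ ε * τg (y i) + τg (y i) * M := by
                refine add_le_add (hgycl _ hyK) ?_
                rw [norm_smul, Real.norm_eq_abs, abs_of_pos hτpos]
                exact mul_le_mul_of_nonneg_left (hgsM _ hyK) hτpos.le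
            _ ≤ (M+1) * τg (y i) := by nlinarith
        calc dist (y (i+1)) x0 ≤ dist (y (i+1)) (y i) + dist (y i) x0 := dist_triangle _ _ _
          _ ≤ (M+1) * τg (y i) + (M+1) * tt i := add_le_add hstep hyd
          _ = (M+1) * tt (i+1) := by rw [(hps i).1, hdteq]; ring
  refine ⟨N, tt, y, fun i => zg (y i), fun i => sg (y i), htt0, hy0, hlt, httN, httN1, ?_⟩
  intro i hi
  have hti : tt i ≤ T := le_trans (hmono (show i ≤ N from hi)) httN
  obtain ⟨hyC, hyd⟩ := hinv i hti
  have htt0 : 0 ≤ tt i := by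
    have h0 : (0:ℝ) ≤ (i:ℝ) * min α 1 := by positivity
    linarith [hgrow i]
  have hyK : y i ∈ K := by
    refine ⟨?_, hyC⟩
    rw [mem_closedBall]
    calc dist (y i) x0 ≤ (M+1) * tt i := hyd
      _ ≤ (M+1) * T := by nlinarith
      _ = δ := hMT
  have hdteq : dt (y i) = τg (y i) := by rw [hdt]; simp [hyK]
  have hnxteq : y (i+1) = yg (y i) := by rw [(hps i).2, hnxt]; simp [hyK]
  have hττ : tt (i+1) - tt i = τg (y i) := by rw [(hps i).1, hdteq]; ring
  have hdball : dist (y i) x0 ≤ δ := by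
    calc dist (y i) x0 ≤ (M+1) * tt i := hyd
      _ ≤ (M+1) * T := by nlinarith
      _ = δ := hMT
  refine ⟨?_, hyC, hdball, ?_, (hgzK _ hyK).2, hgzd _ hyK, hgsF _ hyK, hgsM _ hyK, ?_⟩
  · rw [hττ]; exact hg2 _ hyK
  · rw [hnxteq]; exact hgyC _ hyK
  · rw [hττ, hnxteq]
    have : yg (y i) - y i - τg (y i) • sg (y i)
        = yg (y i) - (y i + τg (y i) • sg (y i)) := by module
    rw [this]
    exact hgycl _ hyK

lemma approx {n : ℕ} {C : Set (E n)} {F : E n → Set (E n)} {x0 : E n} {δ M : ℝ}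
    (hδ : 0 < δ) (hM : 0 ≤ M) (hC : IsClosed C) (hx0 : x0 ∈ C)
    (hbd : ∀ y ∈ closedBall x0 δ ∩ C, ∀ s ∈ F y, ‖s‖ ≤ M)
    (hviab : ∀ y ∈ closedBall x0 δ ∩ C, (F y ∩ tcone C y).Nonempty)
    {ε : ℝ} (hε : 0 < ε) (hε1 : ε ≤ 1) :
    ∃ g : ℝ → E n, g 0 = x0 ∧
      (∀ a b : ℝ, dist (g a) (g b) ≤ (M+1) * |a - b|) ∧
      (∀ t ∈ Icc (0:ℝ) (δ/(M+1)), ∃ yc ∈ C, dist (g t) yc ≤ (M+2)*ε) ∧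
      (∀ a b : ℝ, 0 ≤ a → a < b → b ≤ δ/(M+1) → ∀ S : Set (E n), Convex ℝ S → IsClosed S →
        (∀ z ∈ C, dist z (g a) ≤ (M+2)*(b-a) + (M+2)*ε →
          ∀ w ∈ F z, ∀ u : E n, dist u w ≤ ε → u ∈ S) →
        (b - a)⁻¹ • (g b - g a) ∈ S) := by
  classical
  set T := δ/(M+1) with hT
  obtain ⟨N, tt, y, z, s, htt0, hy0, hlt, httN, httN1, hprops⟩ :=
    euler hδ hM hC hx0 hbd hviab hε hε1
  have hmono : StrictMono tt := strictMono_nat_of_lt_succ hlt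
  set τ : ℕ → ℝ := fun i => tt (i+1) - tt i with hτ
  have hτpos : ∀ i, 0 < τ i := fun i => by rw [hτ]; simp only []; linarith [hlt i]
  set vel : ℕ → E n := fun i => (τ i)⁻¹ • (y (i+1) - y i) with hvel
  have hveld : ∀ i ≤ N, dist (vel i) (s i) ≤ ε := by
    intro i hi
    have heq : vel i - s i = (τ i)⁻¹ • (y (i+1) - y i - τ i • s i) := by
      rw [hvel]
      simp only []
      rw [smul_sub (τ i)⁻¹ (y (i+1) - y i) (τ i • s i), smul_smul,
        inv_mul_cancel₀ (hτpos i).ne', one_smul]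
    rw [dist_eq_norm, heq, norm_smul, Real.norm_eq_abs, abs_inv, abs_of_pos (hτpos i)]
    rw [inv_mul_le_iff₀ (hτpos i)]
    calc ‖y (i+1) - y i - τ i • s i‖ ≤ ε * τ i := (hprops i hi).2.2.2.2.2.2.2.2
      _ = τ i * ε := mul_comm _ _
  have hvelb : ∀ i ≤ N, ‖vel i‖ ≤ M + 1 := by
    intro i hi
    have h1 := hveld i hi
    have h2 := (hprops i hi).2.2.2.2.2.2.2.1
    calc ‖vel i‖ = ‖(vel i - s i) + s i‖ := by rw [sub_add_cancel]
      _ ≤ ‖vel i - s i‖ + ‖s i‖ := norm_add_le _ _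
      _ ≤ ε + M := add_le_add (by rwa [dist_eq_norm] at h1) h2
      _ ≤ M + 1 := by linarith
  set w : ℝ → E n := fun r =>
    ∑ i ∈ Finset.range (N+1), (Set.Ico (tt i) (tt (i+1))).indicator (fun _ => vel i) r
    with hw
  have hwm : Measurable w := by
    apply Finset.measurable_sum
    intro i _
    exact (measurable_const.indicator measurableSet_Ico)
  have hwv : ∀ j ≤ N, ∀ r ∈ Set.Ico (tt j) (tt (j+1)), w r = vel j := by
    intro j hj r hr
    rw [hw]
    simp only []
    rw [Finset.sum_eq_single_of_mem j (Finset.mem_range.2 (Nat.lt_succ_of_le hj))]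
    · exact indicator_of_mem hr _
    · intro i _ hij
      apply indicator_of_notMem
      intro hri
      rcases lt_or_gt_of_ne hij with h | h
      · exact absurd hri.2 (not_lt.2 (le_trans (hmono.monotone (show i+1 ≤ j from h)) hr.1))
      · exact absurd hr.2 (not_lt.2 (le_trans (hmono.monotone (show j+1 ≤ i from h)) hri.1))
  have hw0 : ∀ r : ℝ, w r = 0 ∨ ∃ j ≤ N, r ∈ Set.Ico (tt j) (tt (j+1)) ∧ w r = vel j := by
    intro r
    by_cases hr : ∃ j, j ≤ N ∧ r ∈ Set.Ico (tt j) (tt (j+1))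
    · obtain ⟨j, hj, hrj⟩ := hr
      exact Or.inr ⟨j, hj, hrj, hwv j hj r hrj⟩
    · push_neg at hr
      left
      rw [hw]
      apply Finset.sum_eq_zero
      intro i hi
      exact indicator_of_notMem (hr i (Nat.lt_succ_iff.1 (Finset.mem_range.1 hi))) _
  have hwb : ∀ r, ‖w r‖ ≤ M + 1 := by
    intro r
    rcases hw0 r with h | ⟨j, hj, _, h⟩
    · rw [h]; simp; linarith
    · rw [h]; exact hvelb j hj
  have hinteg : ∀ a b : ℝ, IntervalIntegrable w volume a b := by
    intro a b
    constructor <;>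
    · refine Integrable.mono' (integrable_const (M+1)) hwm.aestronglyMeasurable.restrict ?_
      exact ae_of_all _ hwb
  set g : ℝ → E n := fun r => x0 + ∫ u in (0:ℝ)..r, w u with hg
  have hgdiff : ∀ a b : ℝ, g b - g a = ∫ u in a..b, w u := by
    intro a b
    have hadd := intervalIntegral.integral_add_adjacent_intervals (hinteg 0 a) (hinteg a b)
    rw [hg]
    simp only []
    rw [← hadd]
    abel
  have hglip : ∀ a b : ℝ, dist (g a) (g b) ≤ (M+1) * |a - b| := by
    intro a b
    rw [dist_eq_norm, ← neg_sub (g b) (g a), norm_neg, hgdiff a b]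
    have := intervalIntegral.norm_integral_le_of_norm_le_const (C := M+1) (f := w)
      (a := a) (b := b) (fun u _ => hwb u)
    rwa [abs_sub_comm b a] at this
  have hg0 : g 0 = x0 := by rw [hg]; simp
  have hgy : ∀ j, j ≤ N + 1 → g (tt j) = y j := by
    intro j
    induction j with
    | zero => intro _; rw [htt0, hg0, hy0]
    | succ j ih =>
      intro hj
      have hjN : j ≤ N := Nat.lt_succ_iff.1 hj
      have hgj : g (tt j) = y j := ih (le_trans hjN (Nat.le_succ N))
      have hseg : g (tt (j+1)) - g (tt j) = y (j+1) - y j := by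
        rw [hgdiff]
        rw [intervalIntegral.integral_of_le (hlt j).le]
        rw [← MeasureTheory.setIntegral_congr_set Ioo_ae_eq_Ioc]
        rw [MeasureTheory.setIntegral_congr_fun measurableSet_Ioo
          (fun r hr => hwv j hjN r ⟨hr.1.le, hr.2⟩)]
        rw [MeasureTheory.setIntegral_const, measureReal_def, Real.volume_Ioo,
          ENNReal.toReal_ofReal (by linarith [hlt j])]
        rw [hvel]
        simp only []
        rw [smul_smul, mul_inv_cancel₀ (hτpos j).ne', one_smul]
      have := hseg
      rw [hgj] at this
      linear_combination (norm := module) this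
  have hfind : ∀ t : ℝ, 0 ≤ t → t ≤ T → ∃ j, j ≤ N ∧ t ∈ Set.Ico (tt j) (tt (j+1)) := by
    intro t ht0 htT
    have hPN : t < tt (N+1) := lt_of_le_of_lt htT httN1
    have hexj : ∃ j, t < tt (j+1) := ⟨N, hPN⟩
    set j := Nat.find hexj with hj
    refine ⟨j, Nat.find_min' hexj hPN, ?_, Nat.find_spec hexj⟩
    rcases Nat.eq_zero_or_pos j with h0 | hpos
    · rw [h0, htt0]; exact ht0
    · obtain ⟨m, hm⟩ := Nat.exists_eq_succ_of_ne_zero hpos.ne'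
      have := Nat.find_min hexj (m := m) (by omega)
      rw [hm]
      exact not_lt.1 this
  refine ⟨g, hg0, hglip, ?_, ?_⟩
  · -- closeness to C
    intro t ht
    obtain ⟨j, hjN, hjt⟩ := hfind t ht.1 ht.2
    refine ⟨y j, (hprops j hjN).2.1, ?_⟩
    have h1 : dist (g t) (g (tt j)) ≤ (M+1) * |t - tt j| := hglip t (tt j)
    have h2 : |t - tt j| ≤ ε := by
      rw [abs_of_nonneg (by linarith [hjt.1])]
      have := (hprops j hjN).1
      linarith [hjt.2]
    rw [hgy j (le_trans hjN (Nat.le_succ N))] at h1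
    calc dist (g t) (y j) ≤ (M+1) * |t - tt j| := h1
      _ ≤ (M+1) * ε := mul_le_mul_of_nonneg_left h2 (by linarith)
      _ ≤ (M+2) * ε := by nlinarith
  · -- averages
    intro a b ha hab hbT S hconv hclosed hS
    rw [hgdiff a b]
    refine avgMem hconv hclosed hab (hinteg a b) ?_
    filter_upwards [ae_restrict_mem measurableSet_Ioc] with t ht
    have ht0 : 0 ≤ t := le_trans ha ht.1.le
    have htT : t ≤ T := le_trans ht.2 hbT
    obtain ⟨j, hjN, hjt⟩ := hfind t ht0 htT
    rw [hwv j hjN t hjt]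
    obtain ⟨hτε, hyiC, hyid, hyi1C, hziC, hzid, hsiF, hsiM, hycl⟩ := hprops j hjN
    refine hS (z j) hziC ?_ (s j) hsiF (vel j) (hveld j hjN)
    -- distance estimate
    have hd1 : dist (z j) (y j) ≤ ε := hzid
    have hd2 : dist (y j) (g a) ≤ (M+1) * |tt j - a| := by
      rw [← hgy j (le_trans hjN (Nat.le_succ N))]
      exact hglip (tt j) a
    have habs : |tt j - a| ≤ (b - a) + ε := by
      rw [abs_le]
      constructor
      · -- tt j ≥ t - τ j > a - ε
        have h1 : tt j > t - ε := by
          have := hjt.2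
          linarith [hτε]
        linarith [ht.1]
      · -- tt j ≤ t ≤ b
        linarith [hjt.1, ht.2]
    calc dist (z j) (g a) ≤ dist (z j) (y j) + dist (y j) (g a) := dist_triangle _ _ _
      _ ≤ ε + (M+1) * ((b - a) + ε) :=
          add_le_add hd1 (le_trans hd2 (mul_le_mul_of_nonneg_left habs (by linarith)))
      _ ≤ (M+2)*(b-a) + (M+2)*ε := by nlinarith

lemma partB {n : ℕ} {C : Set (E n)} (hC : IsClosed C) {F : E n → Set (E n)}
    (hosc : OSCRel F C) (hlb : LocBddRel F C)
    (hne : ∀ x ∈ C, (F x).Nonempty) (hcvx : ∀ x ∈ C, Convex ℝ (F x))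
    {x₀ : E n} (hx₀ : x₀ ∈ C)
    (hU : ∃ U ∈ 𝓝 x₀, ∀ x ∈ U ∩ C, (F x ∩ tcone C x).Nonempty) :
    ∃ T > (0:ℝ), ∃ x : ℝ → E n, IsDISol F C T x ∧ x 0 = x₀ := by
  classical
  obtain ⟨U, hUnhds, hUvia⟩ := hU
  obtain ⟨U', hU'o, hU'x, hU'b⟩ := hlb x₀ hx₀
  obtain ⟨MB, hMB⟩ := hU'b.subset_closedBall 0
  set M := max MB 0 with hMdef
  have hM : 0 ≤ M := le_max_right _ _
  have hMB' : (⋃ x ∈ U' ∩ C, F x) ⊆ closedBall 0 M :=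
    hMB.trans (closedBall_subset_closedBall (le_max_left _ _))
  have hUU' : U ∩ U' ∈ 𝓝 x₀ := inter_mem hUnhds (hU'o.mem_nhds hU'x)
  obtain ⟨r, hr, hrsub⟩ := Metric.mem_nhds_iff.1 hUU'
  set δ := r/2 with hδdef
  have hδ : 0 < δ := by positivity
  have hballU : closedBall x₀ δ ⊆ U ∩ U' :=
    (closedBall_subset_ball (by rw [hδdef]; linarith)).trans hrsub
  set T := δ/(M+1) with hTdef
  have hT : 0 < T := by positivity
  have hbd : ∀ y ∈ closedBall x₀ δ ∩ C, ∀ s ∈ F y, ‖s‖ ≤ M := by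
    intro y hy s hs
    have : s ∈ closedBall 0 M := hMB' (mem_iUnion₂.2 ⟨y, ⟨(hballU hy.1).2, hy.2⟩, hs⟩)
    simpa using this
  have hviab : ∀ y ∈ closedBall x₀ δ ∩ C, (F y ∩ tcone C y).Nonempty :=
    fun y hy => hUvia y ⟨(hballU hy.1).1, hy.2⟩
  -- approximating solutions
  have happrox : ∀ k : ℕ, ∃ g : ℝ → E n, g 0 = x₀ ∧
      (∀ a b : ℝ, dist (g a) (g b) ≤ (M+1) * |a - b|) ∧
      (∀ t ∈ Icc (0:ℝ) T, ∃ yc ∈ C, dist (g t) yc ≤ (M+2)*(1/((k:ℝ)+1))) ∧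
      (∀ a b : ℝ, 0 ≤ a → a < b → b ≤ T → ∀ S : Set (E n), Convex ℝ S → IsClosed S →
        (∀ z ∈ C, dist z (g a) ≤ (M+2)*(b-a) + (M+2)*(1/((k:ℝ)+1)) →
          ∀ w ∈ F z, ∀ u : E n, dist u w ≤ 1/((k:ℝ)+1) → u ∈ S) →
        (b - a)⁻¹ • (g b - g a) ∈ S) :=
    fun k => approx hδ hM hC hx₀ hbd hviab (oneDivSucc_pos k) (oneDivSucc_le_one k)
  choose g hg0 hglip hgC hgD using happrox
  set L : NNReal := Real.toNNReal (M+1) with hLdef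
  have hLval : (L:ℝ) = M+1 := Real.coe_toNNReal _ (by linarith)
  have hglip' : ∀ k, LipschitzWith L (g k) := by
    intro k
    apply LipschitzWith.of_dist_le_mul
    intro a b
    rw [hLval, Real.dist_eq]
    exact hglip k a b
  obtain ⟨φ, x, hφ, hxlip, hxlim⟩ := diagLim g hglip' hg0
  have hφk : ∀ k : ℕ, 1/((φ k:ℝ)+1) ≤ 1/((k:ℝ)+1) := by
    intro k
    apply one_div_le_one_div_of_le (by positivity)
    exact_mod_cast Nat.succ_le_succ hφ.le_apply
  have hx00 : x 0 = x₀ := by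
    refine tendsto_nhds_unique (hxlim 0) ?_
    have : (fun k => g (φ k) 0) = fun _ => x₀ := funext fun k => hg0 (φ k)
    rw [this]
    exact tendsto_const_nhds
  -- x stays in C on [0,T]
  have hxC : ∀ t ∈ Icc (0:ℝ) T, x t ∈ C := by
    intro t ht
    have hinf : Tendsto (fun k => infDist (g (φ k) t) C) atTop (𝓝 (infDist (x t) C)) :=
      ((continuous_infDist_pt C).tendsto _).comp (hxlim t)
    have hzero : Tendsto (fun k : ℕ => (M+2) * (1/((k:ℝ)+1))) atTop (𝓝 0) := by
      simpa using oneDivSucc.const_mul (M+2)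
    have hle : infDist (x t) C ≤ 0 := by
      refine le_of_tendsto_of_tendsto' hinf hzero fun k => ?_
      obtain ⟨yc, hycC, hycd⟩ := hgC (φ k) t ht
      refine le_trans (infDist_le_dist_of_mem hycC) (le_trans hycd ?_)
      exact mul_le_mul_of_nonneg_left (hφk k) (by linarith)
    have h0 : infDist (x t) C = 0 := le_antisymm hle infDist_nonneg
    rw [← (IsClosed.mem_iff_infDist_zero hC ⟨x₀, hx₀⟩)] at h0
    exact h0
  -- the key pointwise derivative property
  have hkey : ∀ t, t ∈ Ioo (0:ℝ) T → DifferentiableAt ℝ x t → deriv x t ∈ F (x t) := by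
    intro t ht hdiff
    have hxtC : x t ∈ C := hxC t ⟨ht.1.le, ht.2.le⟩
    have hthick : ∀ ε : ℝ, 0 < ε → deriv x t ∈ cthickening ε (F (x t)) := by
      intro ε hε
      obtain ⟨δ', hδ', hδ'P⟩ := oscUnif hosc hlb hxtC (show (0:ℝ) < ε/2 by linarith)
      set S : Set (E n) := cthickening ε (F (x t)) with hSdef
      have hSconv : Convex ℝ S := (hcvx (x t) hxtC).cthickening ε
      have hSclosed : IsClosed S := isClosed_cthickening
      set h0 : ℝ := min (δ'/(2*(M+2)+1)) (T - t) with hh0def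
      have hh0 : 0 < h0 := lt_min (by positivity) (by linarith [ht.2])
      -- each small right slope of x lies in S
      have hslope : ∀ h : ℝ, 0 < h → h ≤ h0 → h⁻¹ • (x (t+h) - x t) ∈ S := by
        intro h hh hhle
        have hbT : t + h ≤ T := by
          have := le_trans hhle (min_le_right _ _)
          linarith
        have hMh : (M+2) * h ≤ δ'/2 := by
          have h1 : h ≤ δ'/(2*(M+2)+1) := le_trans hhle (min_le_left _ _)
          have h2 : (M+2) * h ≤ (M+2) * (δ'/(2*(M+2)+1)) :=
            mul_le_mul_of_nonneg_left h1 (by linarith)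
          have h3 : (M+2) * (δ'/(2*(M+2)+1)) ≤ δ'/2 := by
            rw [mul_div_assoc']
            rw [div_le_div_iff₀ (by positivity) (by norm_num : (0:ℝ) < 2)]
            nlinarith
          linarith
        -- eventual membership of the approximate slopes
        have hev1 : ∀ᶠ k in atTop, dist (g (φ k) t) (x t) ≤ δ'/4 := by
          have := (hxlim t).eventually (Metric.closedBall_mem_nhds (x t) (show (0:ℝ) < δ'/4 by linarith))
          exact this.mono fun k hk => mem_closedBall.1 hk
        have hev2 : ∀ᶠ k : ℕ in atTop, (M+2) * (1/((k:ℝ)+1)) ≤ δ'/4 := by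
          have hzero : Tendsto (fun k : ℕ => (M+2) * (1/((k:ℝ)+1))) atTop (𝓝 0) := by
            simpa using oneDivSucc.const_mul (M+2)
          exact hzero.eventually (eventually_le_nhds (by linarith))
        have hev3 : ∀ᶠ k : ℕ in atTop, (1:ℝ)/((k:ℝ)+1) ≤ ε/2 :=
          oneDivSucc.eventually (eventually_le_nhds (by linarith))
        have hmemS : ∀ᶠ k in atTop, ((t+h) - t)⁻¹ • (g (φ k) (t+h) - g (φ k) t) ∈ S := by
          filter_upwards [hev1, hev2, hev3] with k hk1 hk2 hk3
          refine hgD (φ k) t (t+h) ht.1.le (by linarith) hbT S hSconv hSclosed ?_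
          intro z hzC hzd w hwF u hud
          have hzxt : dist z (x t) ≤ δ' := by
            have hd1 : dist z (x t) ≤ dist z (g (φ k) t) + dist (g (φ k) t) (x t) :=
              dist_triangle _ _ _
            have hd2 : (M+2) * ((t+h) - t) = (M+2) * h := by ring_nf
            have hd3 : (M+2) * (1/((φ k:ℝ)+1)) ≤ (M+2) * (1/((k:ℝ)+1)) :=
              mul_le_mul_of_nonneg_left (hφk k) (by linarith)
            have : dist z (g (φ k) t) ≤ (M+2)*h + (M+2)*(1/((k:ℝ)+1)) := by
              calc dist z (g (φ k) t) ≤ (M+2)*((t+h)-t) + (M+2)*(1/((φ k:ℝ)+1)) := hzd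
                _ ≤ (M+2)*h + (M+2)*(1/((k:ℝ)+1)) := by rw [hd2]; linarith
            linarith [hk1, hk2]
          have hwthick : w ∈ cthickening (ε/2) (F (x t)) := hδ'P z hzC hzxt hwF
          -- u is within ε/2 + ε/2
          rw [hSdef, mem_cthickening_iff]
          calc EMetric.infEdist u (F (x t))
              ≤ EMetric.infEdist w (F (x t)) + edist u w :=
                EMetric.infEdist_le_infEdist_add_edist
            _ ≤ ENNReal.ofReal (ε/2) + ENNReal.ofReal (ε/2) := by
                refine add_le_add (mem_cthickening_iff.1 hwthick) ?_
                rw [edist_dist]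
                exact ENNReal.ofReal_le_ofReal (le_trans hud (le_trans (hφk k) hk3))
            _ = ENNReal.ofReal ε := by
                rw [← ENNReal.ofReal_add (by linarith) (by linarith)]
                norm_num
        -- pass to the limit in k
        have hlimslope : Tendsto (fun k => ((t+h) - t)⁻¹ • (g (φ k) (t+h) - g (φ k) t))
            atTop (𝓝 (((t+h) - t)⁻¹ • (x (t+h) - x t))) :=
          ((hxlim (t+h)).sub (hxlim t)).const_smul _
        have hmem := hSclosed.mem_of_tendsto hlimslope hmemS
        rwa [add_sub_cancel_left] at hmem
      -- pass to the limit h → 0⁺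
      set hs : ℕ → ℝ := fun m => h0 * (1/((m:ℝ)+1)) with hhs
      have hhs_pos : ∀ m, 0 < hs m := fun m => by
        have := oneDivSucc_pos m; rw [hhs]; positivity
      have hhs_le : ∀ m, hs m ≤ h0 := by
        intro m
        rw [hhs]
        calc h0 * (1/((m:ℝ)+1)) ≤ h0 * 1 :=
              mul_le_mul_of_nonneg_left (oneDivSucc_le_one m) hh0.le
          _ = h0 := mul_one _
      have hhs_lim : Tendsto hs atTop (𝓝 0) := by
        rw [hhs]
        simpa using oneDivSucc.const_mul h0
      have hslopes := slopeRight hdiff.hasDerivAt hhs_pos hhs_lim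
      exact hSclosed.mem_of_tendsto hslopes
        (Eventually.of_forall fun m => hslope (hs m) (hhs_pos m) (hhs_le m))
    -- conclude
    have hclosureFx : closure (F (x t)) = F (x t) := (closedVal hosc hxtC).closure_eq
    rw [← hclosureFx, closure_eq_iInter_cthickening]
    exact mem_iInter₂.2 fun ε hε => hthick ε hε
  -- assemble solution
  refine ⟨T, hT, x, ⟨hx00 ▸ hx₀, deriv x, ?_, ?_, ?_⟩, hx00⟩
  · -- interval integrable
    constructor <;>
    · refine Integrable.mono' (integrable_const ((L:ℝ)))
        ((aestronglyMeasurable_deriv x volume).restrict) ?_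
      exact ae_of_all _ fun s => derivBd hxlip s
  · -- a.e. properties
    have hae1 : ∀ᵐ (s:ℝ) ∂volume, s ≠ 0 ∧ s ≠ T := by
      have hnull : volume ({0, T} : Set ℝ) = 0 := by
        refine measure_union_null ?_ ?_ <;> exact measure_singleton _
      have hset : {s : ℝ | ¬(s ≠ 0 ∧ s ≠ T)} = {0, T} := by
        ext s
        simp only [mem_setOf_eq, not_and_or, not_not, mem_insert_iff, mem_singleton_iff]
      rw [ae_iff, hset]
      exact hnull
    filter_upwards [ae_restrict_mem measurableSet_Icc, ae_restrict_of_ae hae1,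
      ae_restrict_of_ae (hxlip.ae_differentiableAt (μ := volume))] with s hsI hs0T hsd
    have hsIoo : s ∈ Ioo (0:ℝ) T :=
      ⟨lt_of_le_of_ne hsI.1 (Ne.symm hs0T.1), lt_of_le_of_ne hsI.2 hs0T.2⟩
    exact ⟨hxC s hsI, hkey s hsIoo hsd⟩
  · -- integral identity
    intro t ht
    have h := lipFTC hxlip 0 t ht.1
    rw [h]
    abel

end Statement18Aux

/-- viability conditions for constrained differential inclusions;
Lemma 5.26 in Goebel–Sanfelice–Teel. -/
theorem statement18
    {n : ℕ} (C : Set (E n)) (hC : IsClosed C)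
    (F : E n → Set (E n))
    (hosc : OSCRel F C) (hlb : LocBddRel F C)
    (hne : ∀ x ∈ C, (F x).Nonempty) (hcvx : ∀ x ∈ C, Convex ℝ (F x)) :
    -- (a) Necessity
    (∀ T > (0:ℝ), ∀ x : ℝ → E n, IsDISol F C T x →
      (F (x 0) ∩ tcone C (x 0)).Nonempty) ∧
    -- (b) Sufficiency
    (∀ x₀ ∈ C, (∃ U ∈ 𝓝 x₀, ∀ x ∈ U ∩ C, (F x ∩ tcone C x).Nonempty) →
      ∃ T > (0:ℝ), ∃ x : ℝ → E n, IsDISol F C T x ∧ x 0 = x₀) := by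
  constructor
  · intro T hT x hsol
    exact partA hC hosc hlb hne hcvx hT hsol
  · intro x₀ hx₀ hU
    exact partB hC hosc hlb hne hcvx hx₀ hU

end HS
end
end
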